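/- arXiv:2512.22098 — 5 statements merged into one kernel-verified Lean document; each statement's English description precedes it below -/
import Mathlib

section
/- Joint law of nested shapes (Proposition joint-crp). Let 0 ≤ α < 1 and θ > −α, and let ω ∈ 𝒫_n, γ ∈ 𝒫_m with n, m ≥ 1. Then for every μ ∈ 𝒫_{n+m}, Σ_{A set partition of {1,…,n+m} with shape(A) = μ, shape(A|_{{1,…,n}}) = ω, and shape(A|_{{n+1,…,n+m}}) = γ} EPPF_{α,θ}(A) = H(ω, γ | μ) · PSF_{α,θ}(μ). -/
open scoped Classical
open Finset

noncomputable section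

/-- Rising factorial `a_{(b)} = a(a+1)⋯(a+b−1)`, with `a_{(0)} = 1`. -/
def risingFac (a : ℝ) (b : ℕ) : ℝ := ∏ i ∈ Finset.range b, (a + i)

/-- The combinatorial coefficient `C(π)` of an integer partition, given by its multiset of
parts: `C(π) = |π|! / (∏ᵢ πᵢ! · ∏_j a_j(π)!)`. -/
def Cc (s : Multiset ℕ) : ℝ :=
  (Nat.factorial s.sum : ℝ) /
    (((s.map Nat.factorial).prod : ℝ) * ∏ j ∈ s.toFinset, (Nat.factorial (s.count j) : ℝ))

/-- `P(π | x) = C(π) · Σ_{i₁ ≠ ⋯ ≠ i_d} x_{i₁}^{π₁} ⋯ x_{i_d}^{π_d}`, the sum running over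
all tuples of pairwise distinct indices (i.e. over injections). -/
def Plik (s : Multiset ℕ) (x : ℕ → ℝ) : ℝ :=
  Cc s * ∑' f : Fin s.toList.length ↪ ℕ,
    ∏ j : Fin s.toList.length, x (f j) ^ s.toList.get j

/-- The multiset of nonzero entries of a finite sequence of naturals. -/
def nzMulti {k : ℕ} (z : Fin k → ℕ) : Multiset ℕ :=
  Multiset.filter (· ≠ 0) ↑(List.ofFn z)

/-- `z` encodes a valid pair `(z, y)` (with `y j = μ j - z j`) splitting `μ` into `ω` and `γ`. -/
def IsSplit (ω γ μ : Multiset ℕ) (z : Fin μ.toList.length → ℕ) : Prop :=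
  (∀ j, z j ≤ μ.toList.get j) ∧ nzMulti z = ω ∧
    nzMulti (fun j => μ.toList.get j - z j) = γ

/-- The hypergeometric splitting coefficient `H(ω, γ | μ)`. -/
def Hcoef (ω γ μ : Multiset ℕ) : ℝ :=
  ((μ.sum.choose ω.sum : ℕ) : ℝ)⁻¹ *
    ∑ᶠ z : Fin μ.toList.length → ℕ,
      if IsSplit ω γ μ z then
        ((∏ j : Fin μ.toList.length, (μ.toList.get j).choose (z j) : ℕ) : ℝ)
      else 0

/-- `μ ∈ coag(ω, γ)`. -/
def memCoag (ω γ μ : Multiset ℕ) : Prop := ∃ z, IsSplit ω γ μ z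

/-- The Ewens–Pitman sampling formula `PSF_{α,θ}(π)`, for a partition given by its
multiset of parts. -/
def PSF (α θ : ℝ) (s : Multiset ℕ) : ℝ :=
  Cc s * ((∏ i ∈ Finset.range s.card, (θ + i * α)) / risingFac θ s.sum) *
    (s.map (fun p => risingFac (1 - α) (p - 1))).prod

/-- Set partitions of `{1, …, N}`. -/
abbrev SP (N : ℕ) := Finpartition (Finset.univ : Finset (Fin N))

instance {N : ℕ} : Fintype (SP N) :=
  Fintype.ofInjective Finpartition.parts (fun a b h => by
    cases a; cases b; simpa using h)

/-- The Ewens–Pitman exchangeable partition probability function. -/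
def EPPF (α θ : ℝ) {N : ℕ} (P : SP N) : ℝ :=
  ((∏ i ∈ Finset.range P.parts.card, (θ + i * α)) / risingFac θ N) *
    ∏ b ∈ P.parts, risingFac (1 - α) (b.card - 1)

/-- The shape of a set partition: the multiset of its block sizes. -/
def shape {N : ℕ} (P : SP N) : Multiset ℕ := P.parts.val.map Finset.card

/-- The shape of the restriction `A|_B` of a set partition to `B`: the multiset of sizes
of the nonempty intersections of the blocks with `B`. -/
def rshape {N : ℕ} (P : SP N) (B : Finset (Fin N)) : Multiset ℕ :=
  ((P.parts.val.map (· ∩ B)).filter (· ≠ ∅)).map Finset.card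

/-- The subset `{1, …, n}` of `{1, …, n + m}`. -/
def firstBlock (n m : ℕ) : Finset (Fin (n + m)) :=
  Finset.univ.filter (fun i => (i : ℕ) < n)

/-- The subset `{n + 1, …, n + m}` of `{1, …, n + m}`. -/
def secondBlock (n m : ℕ) : Finset (Fin (n + m)) :=
  Finset.univ.filter (fun i => n ≤ (i : ℕ))


-- ========== auxiliary lemmas ==========

lemma countget {β : Type*} [DecidableEq β] :
    ∀ (M : List β) (s : β),
      (Finset.univ.filter fun k : Fin M.length => M.get k = s).card = M.count s
  | [], s => by simp
  | (a :: M), s => by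
      rw [Finset.card_filter]
      show (∑ i : Fin (M.length + 1), if (a :: M).get i = s then 1 else 0) = _
      rw [Fin.sum_univ_succ, ← Finset.card_filter]
      simp only [List.get_cons_succ, List.get_cons_zero]
      rw [List.count_cons]
      have hc := countget M s
      simp only [List.get_eq_getElem] at hc
      by_cases h : a = s <;> simp [h, add_comm, hc]

lemma multiset_exists_ofFn {α β : Type*} [DecidableEq α] (f : α → β) :
    ∀ (L : List β) (s : Multiset α), s.map f = ↑L →
      ∃ g : Fin L.length → α, ↑(List.ofFn g) = s ∧ ∀ j, f (g j) = L.get j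
  | [], s => by
      intro h
      have hs : s = 0 := by simpa [Multiset.map_eq_zero] using h
      exact ⟨Fin.elim0, by simp [hs], fun j => j.elim0⟩
  | (a :: L), s => by
      intro h
      rw [show ((a :: L : List β) : Multiset β) = a ::ₘ ↑L from rfl,
        ← Multiset.map_eq_cons] at h
      obtain ⟨x, hxs, hfx, hrest⟩ := h
      obtain ⟨g', hg', hfg'⟩ := multiset_exists_ofFn f L (s.erase x) hrest
      refine ⟨Fin.cons x g', ?_, ?_⟩
      · rw [List.ofFn_succ]
        simp only [Fin.cons_zero, Fin.cons_succ]
        rw [show ((x :: List.ofFn g' : List α) : Multiset α) = x ::ₘ ↑(List.ofFn g') from rfl,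
          hg', Multiset.cons_erase hxs]
      · intro j
        refine Fin.cases ?_ ?_ j
        · simpa using hfx
        · intro k; simpa using hfg' k

lemma card_fiber_sizes {ι : Type*} [Fintype ι] [DecidableEq ι] {l : ℕ} (c : Fin l → ℕ)
    (hc : ∑ j, c j = Fintype.card ι) :
    (Finset.univ.filter fun f : ι → Fin l => ∀ j, Fintype.card {i // f i = j} = c j).card
      * ∏ j, Nat.factorial (c j) = Nat.factorial (Fintype.card ι) := by
  classical
  set M : List (Fin l) := (List.finRange l).flatMap fun j => List.replicate (c j) j with hM
  have hlen : M.length = Fintype.card ι := by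
    rw [hM, List.length_flatMap]
    simp only [Function.comp_def, List.length_replicate]
    rw [← List.ofFn_eq_map, List.sum_ofFn, hc]
  have hcnt : ∀ j, M.count j = c j := by
    intro j
    rw [hM, List.count_flatMap, ← List.ofFn_eq_map, List.sum_ofFn]
    have : ∀ x : Fin l, (List.count j ∘ fun j => List.replicate (c j) j) x
        = if j = x then c x else 0 := by
      intro x
      simp only [Function.comp_apply, List.count_replicate, beq_iff_eq]
      exact if_congr (by simp [eq_comm]) rfl rfl
    rw [Finset.sum_congr rfl fun x _ => this x, Finset.sum_ite_eq Finset.univ j c]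
    simp
  set e : ι ≃ Fin M.length := (Fintype.equivFin ι).trans (finCongr hlen.symm) with he
  set g₀ : ι → Fin l := fun i => M.get (e i) with hg₀
  have hfib : ∀ j, Fintype.card {i // g₀ i = j} = c j := by
    intro j
    rw [Fintype.card_congr ((Equiv.subtypeEquiv e (fun i => Iff.rfl)) :
      {i // g₀ i = j} ≃ {k // M.get k = j})]
    rw [Fintype.card_subtype, countget M j, hcnt j]
  have hmem : ∀ σ : Equiv.Perm ι, (g₀ ∘ σ) ∈
      (Finset.univ.filter fun f : ι → Fin l => ∀ j, Fintype.card {i // f i = j} = c j) := by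
    intro σ
    rw [Finset.mem_filter]
    refine ⟨Finset.mem_univ _, fun j => ?_⟩
    rw [Fintype.card_congr ((Equiv.subtypeEquiv σ (fun i => Iff.rfl)) :
      {i // (g₀ ∘ σ) i = j} ≃ {i // g₀ i = j}), hfib j]
  have key := Finset.card_eq_sum_card_fiberwise (s := (Finset.univ : Finset (Equiv.Perm ι)))
    (t := Finset.univ.filter fun f : ι → Fin l => ∀ j, Fintype.card {i // f i = j} = c j)
    (f := fun σ : Equiv.Perm ι => g₀ ∘ ⇑σ) (fun σ _ => hmem σ)
  rw [Finset.card_univ, Fintype.card_perm] at key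
  have hfibcard : ∀ f ∈ (Finset.univ.filter fun f : ι → Fin l =>
      ∀ j, Fintype.card {i // f i = j} = c j),
      (Finset.univ.filter fun σ : Equiv.Perm ι => g₀ ∘ σ = f).card = ∏ j, Nat.factorial (c j) := by
    intro f hf
    rw [Finset.mem_filter] at hf
    have hEq : ∀ j, Fintype.card {i // f i = j} = Fintype.card {i // g₀ i = j} := by
      intro j; rw [hf.2 j, hfib j]
    set σ₀ : ι ≃ ι := Equiv.ofFiberEquiv (f := f) (g := g₀)
      (fun j => Fintype.equivOfCardEq (hEq j)) with hσ₀
    have hgσ₀ : ∀ i, g₀ (σ₀ i) = f i := fun i => Equiv.ofFiberEquiv_map _ i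
    have hbij : (Finset.univ.filter fun σ : Equiv.Perm ι => g₀ ∘ σ = f).card
        = (Finset.univ.filter fun τ : Equiv.Perm ι => g₀ ∘ τ = g₀).card := by
      refine Finset.card_bij (fun σ _ => σ * σ₀⁻¹) ?_ ?_ ?_
      · intro σ hσ
        rw [Finset.mem_filter] at hσ ⊢
        refine ⟨Finset.mem_univ _, funext fun i => ?_⟩
        have := congrFun hσ.2 (σ₀⁻¹ i)
        simp only [Function.comp_apply] at this ⊢
        rw [Equiv.Perm.mul_apply, this, ← hgσ₀ (σ₀⁻¹ i)]
        simp
      · intro σ₁ h₁ σ₂ h₂ h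
        exact mul_right_cancel h
      · intro τ hτ
        rw [Finset.mem_filter] at hτ
        refine ⟨τ * σ₀, ?_, by group⟩
        rw [Finset.mem_filter]
        refine ⟨Finset.mem_univ _, funext fun i => ?_⟩
        simp only [Function.comp_apply, Equiv.Perm.mul_apply]
        rw [show g₀ (τ (σ₀ i)) = (g₀ ∘ τ) (σ₀ i) from rfl, hτ.2, hgσ₀]
    rw [hbij, ← Fintype.card_subtype, DomMulAct.stabilizer_card g₀]
    exact Finset.prod_congr rfl fun j _ => by rw [hfib j]
  rw [Finset.sum_congr rfl hfibcard, Finset.sum_const, smul_eq_mul] at key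
  exact key.symm

lemma card_two_block {n m l : ℕ} (z y : Fin l → ℕ) (hz : ∑ j, z j = n) (hy : ∑ j, y j = m) :
    (Finset.univ.filter fun f : Fin (n + m) → Fin l =>
      (∀ j, Fintype.card {i : Fin n // f (Fin.castAdd m i) = j} = z j) ∧
      (∀ j, Fintype.card {i : Fin m // f (Fin.natAdd n i) = j} = y j)).card *
      ((∏ j, Nat.factorial (z j)) * (∏ j, Nat.factorial (y j))) =
      Nat.factorial n * Nat.factorial m := by
  classical
  set E : (Fin (n + m) → Fin l) ≃ (Fin n → Fin l) × (Fin m → Fin l) :=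
    (Equiv.arrowCongr finSumFinEquiv.symm (Equiv.refl (Fin l))).trans
      (Equiv.sumArrowEquivProdArrow _ _ _) with hEdef
  have hE1 : ∀ (f : Fin (n + m) → Fin l) (i : Fin n), (E f).1 i = f (Fin.castAdd m i) := by
    intro f i
    simp [hEdef, Equiv.sumArrowEquivProdArrow, Equiv.arrowCongr]
  have hE2 : ∀ (f : Fin (n + m) → Fin l) (i : Fin m), (E f).2 i = f (Fin.natAdd n i) := by
    intro f i
    simp [hEdef, Equiv.sumArrowEquivProdArrow, Equiv.arrowCongr]
  have hcard : (Finset.univ.filter fun f : Fin (n + m) → Fin l =>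
      (∀ j, Fintype.card {i : Fin n // f (Fin.castAdd m i) = j} = z j) ∧
      (∀ j, Fintype.card {i : Fin m // f (Fin.natAdd n i) = j} = y j)).card
      = ((Finset.univ.filter fun g : Fin n → Fin l =>
          ∀ j, Fintype.card {i // g i = j} = z j) ×ˢ
        (Finset.univ.filter fun h : Fin m → Fin l =>
          ∀ j, Fintype.card {i // h i = j} = y j)).card := by
    refine Finset.card_bij (fun f _ => E f) ?_ ?_ ?_
    · intro f hf
      rw [Finset.mem_filter] at hf
      rw [Finset.mem_product, Finset.mem_filter, Finset.mem_filter]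
      refine ⟨⟨Finset.mem_univ _, fun j => ?_⟩, ⟨Finset.mem_univ _, fun j => ?_⟩⟩
      · rw [Fintype.card_congr ((Equiv.subtypeEquiv (Equiv.refl (Fin n))
          (fun i => by rw [Equiv.refl_apply, hE1]))
            : {i // (E f).1 i = j} ≃ {i // f (Fin.castAdd m i) = j})]
        exact hf.2.1 j
      · rw [Fintype.card_congr ((Equiv.subtypeEquiv (Equiv.refl (Fin m))
          (fun i => by rw [Equiv.refl_apply, hE2]))
            : {i // (E f).2 i = j} ≃ {i // f (Fin.natAdd n i) = j})]
        exact hf.2.2 j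
    · intro f₁ _ f₂ _ h
      exact E.injective h
    · intro p hp
      rw [Finset.mem_product, Finset.mem_filter, Finset.mem_filter] at hp
      refine ⟨E.symm p, ?_, by simp⟩
      rw [Finset.mem_filter]
      have h1 : ∀ i, (E.symm p) (Fin.castAdd m i) = p.1 i := by
        intro i
        have := hE1 (E.symm p) i
        rw [E.apply_symm_apply] at this
        exact this.symm
      have h2 : ∀ i, (E.symm p) (Fin.natAdd n i) = p.2 i := by
        intro i
        have := hE2 (E.symm p) i
        rw [E.apply_symm_apply] at this
        exact this.symm
      refine ⟨Finset.mem_univ _, fun j => ?_, fun j => ?_⟩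
      · rw [Fintype.card_congr ((Equiv.subtypeEquiv (Equiv.refl (Fin n))
          (fun i => by rw [Equiv.refl_apply, h1]))
            : {i // (E.symm p) (Fin.castAdd m i) = j} ≃ {i // p.1 i = j})]
        exact hp.1.2 j
      · rw [Fintype.card_congr ((Equiv.subtypeEquiv (Equiv.refl (Fin m))
          (fun i => by rw [Equiv.refl_apply, h2]))
            : {i // (E.symm p) (Fin.natAdd n i) = j} ≃ {i // p.2 i = j})]
        exact hp.2.2 j
  rw [hcard, Finset.card_product]
  have A := card_fiber_sizes (ι := Fin n) z (by simpa using hz)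
  have B := card_fiber_sizes (ι := Fin m) y (by simpa using hy)
  simp only [Fintype.card_fin] at A B
  calc _ = ((Finset.univ.filter fun g : Fin n → Fin l =>
          ∀ j, Fintype.card {i // g i = j} = z j).card * ∏ j, Nat.factorial (z j)) *
        ((Finset.univ.filter fun h : Fin m → Fin l =>
          ∀ j, Fintype.card {i // h i = j} = y j).card * ∏ j, Nat.factorial (y j)) := by ring
    _ = _ := by rw [A, B]

def fibF {N l : ℕ} (f : Fin N → Fin l) (j : Fin l) : Finset (Fin N) :=
  Finset.univ.filter fun i => f i = j

lemma fibF_disj {N l : ℕ} (f : Fin N → Fin l) {j j' : Fin l} (h : j ≠ j') :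
    Disjoint (fibF f j) (fibF f j') := by
  rw [Finset.disjoint_left]
  intro i hi hi'
  simp only [fibF, Finset.mem_filter] at hi hi'
  exact h (by rw [← hi.2, hi'.2])

def toSP {N l : ℕ} (f : Fin N → Fin l) : SP N :=
  Finpartition.ofErase (Finset.univ.image (fibF f))
    (by
      rw [Finset.supIndep_iff_pairwiseDisjoint]
      intro a ha b hb hab
      simp only [Finset.coe_image, Set.mem_image] at ha hb
      obtain ⟨j, -, rfl⟩ := ha
      obtain ⟨j', -, rfl⟩ := hb
      have hjj : j ≠ j' := fun h => hab (by rw [h])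
      exact fibF_disj f hjj)
    (Finset.eq_univ_of_forall fun i => Finset.mem_sup.2
      ⟨fibF f (f i), Finset.mem_image_of_mem _ (Finset.mem_univ _), by simp [fibF]⟩)

lemma toSP_parts {N l : ℕ} (f : Fin N → Fin l) (hf : ∀ j, (fibF f j).Nonempty) :
    (toSP f).parts = Finset.univ.image (fibF f) := by
  rw [toSP, Finpartition.ofErase_parts]
  apply Finset.erase_eq_of_notMem
  intro h
  rw [Finset.mem_image] at h
  obtain ⟨j, -, hj⟩ := h
  exact Finset.not_nonempty_empty (hj ▸ hf j)

lemma fibF_injective {N l : ℕ} (f : Fin N → Fin l) (hf : ∀ j, (fibF f j).Nonempty) :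
    Function.Injective (fibF f) := by
  intro j j' h
  by_contra hjj
  obtain ⟨i, hi⟩ := hf j
  exact Finset.disjoint_left.1 (fibF_disj f hjj) hi (h ▸ hi)

lemma toSP_parts_val {N l : ℕ} (f : Fin N → Fin l) (hf : ∀ j, (fibF f j).Nonempty) :
    (toSP f).parts.val = (Finset.univ.val : Multiset (Fin l)).map (fibF f) := by
  rw [toSP_parts f hf]
  exact Finset.image_val_of_injOn ((fibF_injective f hf).injOn)

lemma shape_toSP {N l : ℕ} (f : Fin N → Fin l) (hf : ∀ j, (fibF f j).Nonempty) :
    shape (toSP f) = ↑(List.ofFn fun j => (fibF f j).card) := by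
  rw [shape, toSP_parts_val f hf, Multiset.map_map, ← Fin.univ_val_map]
  rfl

lemma rshape_toSP {N l : ℕ} (f : Fin N → Fin l) (hf : ∀ j, (fibF f j).Nonempty)
    (B : Finset (Fin N)) :
    rshape (toSP f) B = nzMulti (fun j => (fibF f j ∩ B).card) := by
  rw [rshape, toSP_parts_val f hf, Multiset.map_map, nzMulti, ← Fin.univ_val_map,
    Multiset.filter_map, Multiset.map_map, Multiset.filter_map]
  have hpred : ∀ x ∈ (Finset.univ.val : Multiset (Fin l)),
      ((fun x => x ≠ ∅) ∘ (fun x => x ∩ B) ∘ fibF f) x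
        ↔ ((fun x => x ≠ 0) ∘ fun j => (fibF f j ∩ B).card) x := by
    intro x _
    simp only [Function.comp_apply, ne_eq]
    rw [not_iff_not, Finset.card_eq_zero]
  rw [Multiset.filter_congr hpred]
  rfl

lemma card_fiber_toSP {N : ℕ} (L : List ℕ) (hpos : ∀ j, 0 < L.get j) (A : SP N)
    (hA : A.parts.val.map Finset.card = ↑L) :
    (Finset.univ.filter fun f : Fin N → Fin L.length =>
        (∀ j, (fibF f j).card = L.get j) ∧ toSP f = A).card
      = ∏ s ∈ L.toFinset, Nat.factorial (L.count s) := by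
  classical
  obtain ⟨b₀, hb₀val, hb₀card⟩ := multiset_exists_ofFn Finset.card L A.parts.val hA
  have hmemb : ∀ j, b₀ j ∈ A.parts := by
    intro j
    have : b₀ j ∈ A.parts.val := by
      rw [← hb₀val, Multiset.mem_coe]
      exact List.mem_ofFn.2 ⟨j, rfl⟩
    exact this
  have hb₀inj : Function.Injective b₀ := by
    rw [← List.nodup_ofFn]
    rw [← Multiset.coe_nodup, hb₀val]
    exact A.parts.nodup
  have hcards : A.parts.card = L.length := by
    have := congrArg Multiset.card hA
    rw [Multiset.card_map, Multiset.coe_card] at this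
    exact this
  have e₀bij : Function.Bijective (fun j => (⟨b₀ j, hmemb j⟩ : {x // x ∈ A.parts})) := by
    rw [Fintype.bijective_iff_injective_and_card]
    constructor
    · intro a b h
      exact hb₀inj (congrArg Subtype.val h)
    · rw [Fintype.card_coe, hcards, Fintype.card_fin]
  set e₀ : Fin L.length ≃ {x // x ∈ A.parts} := Equiv.ofBijective _ e₀bij with he₀
  have he₀app : ∀ j, (e₀ j : Finset (Fin N)) = b₀ j := fun j => rfl
  set Θ : Equiv.Perm (Fin L.length) → (Fin N → Fin L.length) :=
    fun σ i => σ⁻¹ (e₀.symm ⟨A.part i, A.part_mem.2 (Finset.mem_univ i)⟩) with hΘ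
  have hfibΘ : ∀ σ j, fibF (Θ σ) j = b₀ (σ j) := by
    intro σ j
    ext i
    simp only [fibF, Finset.mem_filter, Finset.mem_univ, true_and, hΘ]
    constructor
    · intro h
      have h0 : e₀.symm ⟨A.part i, A.part_mem.2 (Finset.mem_univ i)⟩ = σ j := by
        rw [← h]; simp
      have h3 : (⟨A.part i, A.part_mem.2 (Finset.mem_univ i)⟩ : {x // x ∈ A.parts})
          = e₀ (σ j) := by rw [← h0, Equiv.apply_symm_apply]
      have h2 : A.part i = b₀ (σ j) := by
        have := congrArg Subtype.val h3
        rwa [he₀app] at this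
      exact h2 ▸ A.mem_part (Finset.mem_univ i)
    · intro h
      have h2 : A.part i = b₀ (σ j) := A.part_eq_of_mem (hmemb (σ j)) h
      have : e₀.symm ⟨A.part i, A.part_mem.2 (Finset.mem_univ i)⟩ = σ j := by
        rw [Equiv.symm_apply_eq]
        exact Subtype.ext (by rw [he₀app]; exact h2)
      rw [this]
      simp
  have key : (Finset.univ.filter fun f : Fin N → Fin L.length =>
        (∀ j, (fibF f j).card = L.get j) ∧ toSP f = A).card
      = (Finset.univ.filter fun σ : Equiv.Perm (Fin L.length) =>
          L.get ∘ ⇑σ = L.get).card := by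
    symm
    refine Finset.card_bij (fun σ _ => Θ σ) ?_ ?_ ?_
    · intro σ hσ
      rw [Finset.mem_filter] at hσ
      rw [Finset.mem_filter]
      have hcard : ∀ j, (fibF (Θ σ) j).card = L.get j := by
        intro j
        rw [hfibΘ σ j, hb₀card (σ j)]
        exact congrFun hσ.2 j
      have hne : ∀ j, (fibF (Θ σ) j).Nonempty := by
        intro j
        rw [← Finset.card_pos, hcard j]
        exact hpos j
      refine ⟨Finset.mem_univ _, hcard, ?_⟩
      apply Finpartition.ext
      rw [toSP_parts _ hne]
      ext x
      rw [Finset.mem_image]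
      constructor
      · rintro ⟨j, -, rfl⟩
        rw [hfibΘ σ j]
        exact hmemb (σ j)
      · intro hx
        have : x ∈ A.parts.val := hx
        rw [← hb₀val, Multiset.mem_coe, List.mem_ofFn] at this
        obtain ⟨j, rfl⟩ := Set.mem_range.1 this
        exact ⟨σ⁻¹ j, Finset.mem_univ _, by rw [hfibΘ σ (σ⁻¹ j)]; simp⟩
    · intro σ₁ h₁ σ₂ h₂ h
      have h' : Θ σ₁ = Θ σ₂ := h
      apply Equiv.ext
      intro j
      apply hb₀inj
      rw [← hfibΘ σ₁ j, ← hfibΘ σ₂ j, h']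
    · intro f hf
      rw [Finset.mem_filter] at hf
      have hne : ∀ j, (fibF f j).Nonempty := by
        intro j
        rw [← Finset.card_pos, hf.2.1 j]
        exact hpos j
      have hin : ∀ j, fibF f j ∈ A.parts := by
        intro j
        rw [← hf.2.2, toSP_parts f hne]
        exact Finset.mem_image_of_mem _ (Finset.mem_univ j)
      have huinj : Function.Injective
          (fun j => e₀.symm ⟨fibF f j, hin j⟩ : Fin L.length → Fin L.length) := by
        intro a b h
        have h1 : e₀.symm ⟨fibF f a, hin a⟩ = e₀.symm ⟨fibF f b, hin b⟩ := h
        have h2 : (⟨fibF f a, hin a⟩ : {x // x ∈ A.parts}) = ⟨fibF f b, hin b⟩ :=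
          e₀.symm.injective h1
        exact fibF_injective f hne (congrArg Subtype.val h2)
      set σ : Equiv.Perm (Fin L.length) :=
        Equiv.ofBijective _ (Finite.injective_iff_bijective.1 huinj) with hσdef
      have hσapp : ∀ j, σ j = e₀.symm ⟨fibF f j, hin j⟩ := fun j => rfl
      have hbσ : ∀ j, b₀ (σ j) = fibF f j := by
        intro j
        rw [hσapp j, ← he₀app]
        rw [Equiv.apply_symm_apply]
      refine ⟨σ, ?_, ?_⟩
      · rw [Finset.mem_filter]
        refine ⟨Finset.mem_univ _, funext fun j => ?_⟩
        simp only [Function.comp_apply]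
        rw [← hb₀card (σ j), hbσ j]
        exact hf.2.1 j
      · funext i
        have hpart : A.part i = fibF f (f i) :=
          A.part_eq_of_mem (hin (f i)) (by simp [fibF])
        rw [hΘ]
        simp only
        have : (⟨A.part i, A.part_mem.2 (Finset.mem_univ i)⟩ : {x // x ∈ A.parts})
            = ⟨fibF f (f i), hin (f i)⟩ := Subtype.ext hpart
        rw [this, ← hσapp (f i)]
        simp
  rw [key, ← Fintype.card_subtype, DomMulAct.stabilizer_card']
  have himg : Finset.univ.image (L.get) = L.toFinset := by
    ext s
    rw [Finset.mem_image, List.mem_toFinset]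
    constructor
    · rintro ⟨j, -, rfl⟩
      exact L.get_mem _
    · intro hs
      obtain ⟨j, hj⟩ := List.mem_iff_get.1 hs
      exact ⟨j, Finset.mem_univ _, hj⟩
  rw [himg]
  refine Finset.prod_congr rfl fun s hs => ?_
  rw [Fintype.card_subtype, countget L s]

lemma nzsum {k : ℕ} (z : Fin k → ℕ) : (nzMulti z).sum = ∑ j, z j := by
  have h := Multiset.filter_add_not (fun x => x ≠ 0) (↑(List.ofFn z) : Multiset ℕ)
  have h2 : ((List.ofFn z : List ℕ) : Multiset ℕ).sum = ∑ j, z j := by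
    rw [show ((List.ofFn z : List ℕ) : Multiset ℕ).sum = (List.ofFn z).sum from rfl,
      List.sum_ofFn]
  have h3 := congrArg Multiset.sum h
  rw [Multiset.sum_add, h2] at h3
  have h4 : (Multiset.filter (fun x => ¬ x ≠ 0) (↑(List.ofFn z) : Multiset ℕ)).sum = 0 := by
    apply Multiset.sum_eq_zero
    intro x hx
    have := Multiset.of_mem_filter hx
    simpa using this
  rw [h4, add_zero] at h3
  rw [nzMulti]
  exact h3

lemma inter_first_card {n m l : ℕ} (f : Fin (n + m) → Fin l) (j : Fin l) :
    (fibF f j ∩ firstBlock n m).card = Fintype.card {i : Fin n // f (Fin.castAdd m i) = j} := by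
  rw [Fintype.card_subtype]
  have heq : fibF f j ∩ firstBlock n m
      = (Finset.univ.filter fun i : Fin n => f (Fin.castAdd m i) = j).map
          (Fin.castAddEmb m) := by
    ext i
    simp only [Finset.mem_inter, fibF, firstBlock, Finset.mem_filter, Finset.mem_univ,
      true_and, Finset.mem_map]
    constructor
    · rintro ⟨h1, h2⟩
      refine ⟨⟨(i : ℕ), h2⟩, ?_, ?_⟩
      · rw [show Fin.castAdd m (⟨(i : ℕ), h2⟩ : Fin n) = i from Fin.ext rfl]
        exact h1
      · exact Fin.ext rfl
    · rintro ⟨i₀, hi₀, rfl⟩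
      exact ⟨hi₀, i₀.isLt⟩
  rw [heq, Finset.card_map]

lemma inter_second_card {n m l : ℕ} (f : Fin (n + m) → Fin l) (j : Fin l) :
    (fibF f j ∩ secondBlock n m).card = Fintype.card {i : Fin m // f (Fin.natAdd n i) = j} := by
  rw [Fintype.card_subtype]
  have heq : fibF f j ∩ secondBlock n m
      = (Finset.univ.filter fun i : Fin m => f (Fin.natAdd n i) = j).map
          (Fin.natAddEmb n) := by
    ext i
    simp only [Finset.mem_inter, fibF, secondBlock, Finset.mem_filter, Finset.mem_univ,
      true_and, Finset.mem_map]
    constructor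
    · rintro ⟨h1, h2⟩
      have hlt : (i : ℕ) - n < m := by omega
      have hieq : Fin.natAdd n (⟨(i : ℕ) - n, hlt⟩ : Fin m) = i := Fin.ext (by
        simp only [Fin.coe_natAdd]
        omega)
      refine ⟨⟨(i : ℕ) - n, hlt⟩, ?_, ?_⟩
      · rw [hieq]
        exact h1
      · exact hieq
    · rintro ⟨i₀, hi₀, rfl⟩
      refine ⟨hi₀, ?_⟩
      simp [Fin.le_def]
  rw [heq, Finset.card_map]

lemma fib_card_split {n m l : ℕ} (f : Fin (n + m) → Fin l) (j : Fin l) :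
    (fibF f j).card
      = (fibF f j ∩ firstBlock n m).card + (fibF f j ∩ secondBlock n m).card := by
  have h1 : fibF f j ∩ firstBlock n m = (fibF f j).filter (fun i : Fin (n + m) => (i : ℕ) < n) := by
    ext i
    simp only [Finset.mem_inter, firstBlock, Finset.mem_filter, Finset.mem_univ, true_and]
  have h2 : fibF f j ∩ secondBlock n m = (fibF f j).filter (fun i : Fin (n + m) => ¬ (i : ℕ) < n) := by
    ext i
    simp only [Finset.mem_inter, secondBlock, Finset.mem_filter, Finset.mem_univ, true_and,
      not_lt]
  rw [h1, h2, Finset.card_filter_add_card_filter_not]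

/-- **Joint law of nested shapes** (Proposition joint-crp): for every `μ ∈ 𝒫_{n+m}`, the
total EPPF mass of set partitions of `{1,…,n+m}` with shape `μ` whose restrictions to
`{1,…,n}` and `{n+1,…,n+m}` have shapes `ω` and `γ` equals `H(ω, γ | μ) · PSF_{α,θ}(μ)`. -/
theorem joint_law_nested_shapes {α θ : ℝ} (hα0 : 0 ≤ α) (hα1 : α < 1) (hθ : -α < θ)
    {n m : ℕ} (hn : 1 ≤ n) (hm : 1 ≤ m) (ω : Nat.Partition n) (γ : Nat.Partition m)
    (μ : Nat.Partition (n + m)) :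
    (∑ A ∈ Finset.univ.filter (fun A : SP (n + m) =>
          shape A = μ.parts ∧ rshape A (firstBlock n m) = ω.parts ∧
            rshape A (secondBlock n m) = γ.parts),
        EPPF α θ A)
      = Hcoef ω.parts γ.parts μ.parts * PSF α θ μ.parts := by
  classical
  set L : List ℕ := μ.parts.toList with hLdef
  have hLcoe : (↑L : Multiset ℕ) = μ.parts := Multiset.coe_toList _
  have hpos : ∀ j : Fin L.length, 0 < L.get j := by
    intro j
    exact μ.parts_pos (by rw [← hLcoe]; exact Multiset.mem_coe.2 (L.get_mem _))
  have hNsum : μ.parts.sum = n + m := μ.parts_sum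
  have hsumfin : ∑ j, L.get j = n + m := by
    have h1 : (List.ofFn L.get).sum = ∑ j, L.get j := List.sum_ofFn
    rw [List.ofFn_get] at h1
    rw [← h1]
    have : ((↑L : Multiset ℕ)).sum = L.sum := rfl
    rw [← this, hLcoe, hNsum]
  have hub : ∀ j, L.get j ≤ n + m := by
    intro j
    rw [← hsumfin]
    exact Finset.single_le_sum (fun _ _ => Nat.zero_le _) (Finset.mem_univ j)
  set S : Finset (SP (n + m)) := Finset.univ.filter (fun A : SP (n + m) =>
    shape A = μ.parts ∧ rshape A (firstBlock n m) = ω.parts ∧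
      rshape A (secondBlock n m) = γ.parts) with hS
  set K : ℕ := ∏ s ∈ μ.parts.toFinset, Nat.factorial (μ.parts.count s) with hKdef
  set V : ℝ := (∏ i ∈ Finset.range (Multiset.card μ.parts), (θ + i * α)) /
      risingFac θ (n + m) * (μ.parts.map (fun p => risingFac (1 - α) (p - 1))).prod with hV
  -- Step 1: the sum of EPPF over S is S.card • V
  have hEPPF : ∀ A ∈ S, EPPF α θ A = V := by
    intro A hA
    rw [hS, Finset.mem_filter] at hA
    obtain ⟨-, hsh, -, -⟩ := hA
    rw [EPPF, hV]
    have hc : A.parts.card = Multiset.card μ.parts := by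
      have := congrArg Multiset.card hsh
      rwa [shape, Multiset.card_map] at this
    have hp : ∏ b ∈ A.parts, risingFac (1 - α) (b.card - 1)
        = (μ.parts.map (fun p => risingFac (1 - α) (p - 1))).prod := by
      rw [Finset.prod_eq_multiset_prod, ← hsh, shape, Multiset.map_map]
      rfl
    rw [hc, hp]
  rw [Finset.sum_congr rfl hEPPF, Finset.sum_const, nsmul_eq_mul]
  -- Step 2: main counting identity
  have hSH : (S.card : ℝ) = Hcoef ω.parts γ.parts μ.parts * Cc μ.parts := by
    set F' : Finset (Fin (n + m) → Fin L.length) :=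
      Finset.univ.filter (fun f => (∀ j, (fibF f j).card = L.get j) ∧
        IsSplit ω.parts γ.parts μ.parts (fun j => (fibF f j ∩ firstBlock n m).card)) with hF'
    set Z : Finset (Fin L.length → ℕ) :=
      (Fintype.piFinset fun _ : Fin L.length => Finset.range (n + m + 1)).filter
        (fun z => IsSplit ω.parts γ.parts μ.parts z) with hZ
    set Tcard : (Fin L.length → ℕ) → ℕ := fun z =>
      (Finset.univ.filter fun f : Fin (n + m) → Fin L.length =>
        (∀ j, Fintype.card {i : Fin n // f (Fin.castAdd m i) = j} = z j) ∧
        (∀ j, Fintype.card {i : Fin m // f (Fin.natAdd n i) = j} = L.get j - z j)).card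
      with hTdef
    have hKpos : 0 < K := Finset.prod_pos (fun s _ => Nat.factorial_pos _)
    have hKne : (K : ℝ) ≠ 0 := Nat.cast_ne_zero.2 hKpos.ne'
    -- fibers of toSP over S
    have hΦS : ∀ f ∈ F', toSP f ∈ S := by
      intro f hf
      rw [hF', Finset.mem_filter] at hf
      obtain ⟨-, hcards, hsplit⟩ := hf
      obtain ⟨hle, hω, hγ⟩ := hsplit
      have hne : ∀ j, (fibF f j).Nonempty := fun j =>
        Finset.card_pos.1 (by rw [hcards j]; exact hpos j)
      rw [hS, Finset.mem_filter]
      refine ⟨Finset.mem_univ _, ?_, ?_, ?_⟩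
      · rw [shape_toSP f hne]
        have hfun : (fun j => (fibF f j).card) = L.get := funext hcards
        rw [hfun, List.ofFn_get, hLcoe]
      · rw [rshape_toSP f hne]
        exact hω
      · rw [rshape_toSP f hne]
        have hfun : (fun j => (fibF f j ∩ secondBlock n m).card)
            = fun j => μ.parts.toList.get j - (fibF f j ∩ firstBlock n m).card := by
          funext j
          have h1 := fib_card_split f j
          have h2 := hcards j
          show (fibF f j ∩ secondBlock n m).card
            = L.get j - (fibF f j ∩ firstBlock n m).card
          omega
        rw [hfun]
        exact hγ
    have hcount1 : F'.card = S.card * K := by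
      rw [Finset.card_eq_sum_card_fiberwise (f := fun f => toSP f) (t := S) hΦS]
      have hfib : ∀ A ∈ S, (F'.filter fun f => toSP f = A).card = K := by
        intro A hA
        rw [hS, Finset.mem_filter] at hA
        obtain ⟨-, hsh, hrω, hrγ⟩ := hA
        have hAval : A.parts.val.map Finset.card = ↑L := by
          rw [show A.parts.val.map Finset.card = shape A from rfl, hsh, ← hLcoe]
        have hGA : F'.filter (fun f => toSP f = A)
            = Finset.univ.filter (fun f : Fin (n + m) → Fin L.length =>
                (∀ j, (fibF f j).card = L.get j) ∧ toSP f = A) := by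
          rw [hF', Finset.filter_filter]
          refine Finset.filter_congr fun f _ => ?_
          constructor
          · rintro ⟨⟨h1, -⟩, h2⟩; exact ⟨h1, h2⟩
          · rintro ⟨h1, h2⟩
            have hne : ∀ j, (fibF f j).Nonempty := fun j =>
              Finset.card_pos.1 (by rw [h1 j]; exact hpos j)
            refine ⟨⟨h1, ?_, ?_, ?_⟩, h2⟩
            · intro j
              show (fibF f j ∩ firstBlock n m).card ≤ L.get j
              rw [← h1 j]
              exact Finset.card_le_card Finset.inter_subset_left
            · rw [← rshape_toSP f hne, h2]
              exact hrω
            · have hfun : (fun j => μ.parts.toList.get j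
                  - (fibF f j ∩ firstBlock n m).card)
                  = fun j => (fibF f j ∩ secondBlock n m).card := by
                funext j
                have h3 := fib_card_split f j
                have h4 := h1 j
                show L.get j - (fibF f j ∩ firstBlock n m).card
                  = (fibF f j ∩ secondBlock n m).card
                omega
              rw [hfun, ← rshape_toSP f hne, h2]
              exact hrγ
        rw [hGA, card_fiber_toSP L hpos A hAval, hKdef, ← hLcoe]
        rw [List.toFinset_coe]
        refine Finset.prod_congr rfl fun s _ => ?_
        rw [Multiset.coe_count]
      rw [Finset.sum_congr rfl hfib, Finset.sum_const, smul_eq_mul]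
    -- fibers of the intersection-vector over Z
    have hzZ : ∀ f ∈ F', (fun j => (fibF f j ∩ firstBlock n m).card) ∈ Z := by
      intro f hf
      rw [hF', Finset.mem_filter] at hf
      obtain ⟨-, hcards, hsplit⟩ := hf
      rw [hZ, Finset.mem_filter]
      refine ⟨?_, hsplit⟩
      rw [Fintype.mem_piFinset]
      intro j
      rw [Finset.mem_range]
      have h1 : (fibF f j ∩ firstBlock n m).card ≤ (fibF f j).card :=
        Finset.card_le_card Finset.inter_subset_left
      have h2 := hcards j
      have h3 := hub j
      omega
    have hcount2 : F'.card = ∑ z ∈ Z, Tcard z := by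
      rw [Finset.card_eq_sum_card_fiberwise
        (f := fun f => fun j => (fibF f j ∩ firstBlock n m).card) (t := Z) hzZ]
      refine Finset.sum_congr rfl fun z hz => ?_
      rw [hZ, Finset.mem_filter] at hz
      obtain ⟨hle, hωz, hγz⟩ := hz.2
      have hlej : ∀ j, z j ≤ L.get j := fun j => hle j
      rw [hTdef]
      congr 1
      rw [hF', Finset.filter_filter]
      refine Finset.filter_congr fun f _ => ?_
      constructor
      · rintro ⟨⟨hcards, -⟩, hzeq⟩
        have hzeqj : ∀ j, (fibF f j ∩ firstBlock n m).card = z j :=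
          fun j => congrFun hzeq j
        constructor
        · intro j
          rw [← inter_first_card, hzeqj j]
        · intro j
          rw [← inter_second_card]
          have h3 := fib_card_split f j
          have h4 := hcards j
          have h5 := hzeqj j
          omega
      · rintro ⟨hc1, hc2⟩
        have hfz : ∀ j, (fibF f j ∩ firstBlock n m).card = z j := fun j => by
          rw [inter_first_card]; exact hc1 j
        have hcards : ∀ j, (fibF f j).card = L.get j := by
          intro j
          have h3 := fib_card_split f j
          have h4 := hfz j
          have h5 : (fibF f j ∩ secondBlock n m).card = L.get j - z j := by
            rw [inter_second_card]; exact hc2 j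
          have h6 := hlej j
          omega
        refine ⟨⟨hcards, ?_⟩, funext hfz⟩
        have hzv : (fun j => (fibF f j ∩ firstBlock n m).card) = z := funext hfz
        rw [hzv]
        exact ⟨hle, hωz, hγz⟩
    have hcount3 : ∀ z ∈ Z, Tcard z * ((∏ j, Nat.factorial (z j)) *
        (∏ j, Nat.factorial (L.get j - z j))) = Nat.factorial n * Nat.factorial m := by
      intro z hz
      rw [hZ, Finset.mem_filter] at hz
      obtain ⟨-, hωz, hγz⟩ := hz.2
      apply card_two_block
      · have h1 := congrArg Multiset.sum hωz
        rw [nzsum, ω.parts_sum] at h1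
        exact h1
      · have h1 := congrArg Multiset.sum hγz
        rw [nzsum, γ.parts_sum] at h1
        exact h1
    -- Hcoef as a finite sum
    have hHC : Hcoef ω.parts γ.parts μ.parts = (((n + m).choose n : ℕ) : ℝ)⁻¹ *
        ∑ z ∈ Z, ((∏ j, (L.get j).choose (z j) : ℕ) : ℝ) := by
      rw [Hcoef, hNsum, ω.parts_sum]
      congr 1
      have hsupp : (Function.support fun z : Fin L.length → ℕ =>
          if IsSplit ω.parts γ.parts μ.parts z then
            ((∏ j : Fin L.length, (L.get j).choose (z j) : ℕ) : ℝ)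
          else 0) ⊆ ↑Z := by
        intro z hzz
        rw [Function.mem_support] at hzz
        by_cases hsp : IsSplit ω.parts γ.parts μ.parts z
        · refine Finset.mem_coe.2 ?_
          rw [hZ, Finset.mem_filter]
          refine ⟨?_, hsp⟩
          rw [Fintype.mem_piFinset]
          intro j
          rw [Finset.mem_range]
          have h1 : z j ≤ L.get j := hsp.1 j
          have h2 := hub j
          omega
        · simp [hsp] at hzz
      rw [finsum_eq_sum_of_support_subset _ hsupp]
      refine Finset.sum_congr rfl fun z hz => ?_
      rw [hZ, Finset.mem_filter] at hz
      rw [if_pos hz.2]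
    -- Cc explicitly
    have hmapfac : L.map Nat.factorial = List.ofFn (fun j => Nat.factorial (L.get j)) := by
      conv_lhs => rw [← List.ofFn_get L]
      rw [List.map_ofFn]
      rfl
    have hPne : (∏ j, (Nat.factorial (L.get j) : ℝ)) ≠ 0 :=
      Finset.prod_ne_zero_iff.2 fun j _ => Nat.cast_ne_zero.2 (Nat.factorial_ne_zero _)
    have hchne : (((n + m).choose n : ℕ) : ℝ) ≠ 0 :=
      Nat.cast_ne_zero.2 (Nat.choose_pos (Nat.le_add_right n m)).ne'
    have hCc : Cc μ.parts = (Nat.factorial (n + m) : ℝ) /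
        ((∏ j, (Nat.factorial (L.get j) : ℝ)) * (K : ℝ)) := by
      rw [Cc, hNsum]
      congr 1
      congr 1
      · rw [← hLcoe]
        rw [show ((↑L : Multiset ℕ).map Nat.factorial) = ↑(L.map Nat.factorial) from rfl]
        rw [hmapfac]
        rw [show ((↑(List.ofFn fun j => Nat.factorial (L.get j)) : Multiset ℕ)).prod
            = (List.ofFn fun j => Nat.factorial (L.get j)).prod from rfl]
        rw [List.prod_ofFn]
        push_cast
        rfl
      · rw [hKdef]
        push_cast
        rfl
    -- termwise identity
    have hterm : ∀ z ∈ Z, (Tcard z : ℝ)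
        = (Nat.factorial (n + m) : ℝ) / ((∏ j, (Nat.factorial (L.get j) : ℝ)) *
            (((n + m).choose n : ℕ) : ℝ)) * ((∏ j, (L.get j).choose (z j) : ℕ) : ℝ) := by
      intro z hz
      have hzZ' := hz
      rw [hZ, Finset.mem_filter] at hzZ'
      obtain ⟨hle, -, -⟩ := hzZ'.2
      have hlej : ∀ j, z j ≤ L.get j := fun j => hle j
      have hfacne : ∀ k : ℕ, (Nat.factorial k : ℝ) ≠ 0 :=
        fun k => Nat.cast_ne_zero.2 (Nat.factorial_ne_zero k)
      have hQne : ((∏ j, (Nat.factorial (z j) : ℝ)) *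
          (∏ j, (Nat.factorial (L.get j - z j) : ℝ))) ≠ 0 :=
        mul_ne_zero (Finset.prod_ne_zero_iff.2 fun j _ => hfacne _)
          (Finset.prod_ne_zero_iff.2 fun j _ => hfacne _)
      have hT : (Tcard z : ℝ) * ((∏ j, (Nat.factorial (z j) : ℝ)) *
          (∏ j, (Nat.factorial (L.get j - z j) : ℝ)))
          = (Nat.factorial n : ℝ) * (Nat.factorial m : ℝ) := by
        exact_mod_cast hcount3 z hz
      have hCh : ((∏ j, (L.get j).choose (z j) : ℕ) : ℝ) *
          ((∏ j, (Nat.factorial (z j) : ℝ)) *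
            (∏ j, (Nat.factorial (L.get j - z j) : ℝ)))
          = ∏ j, (Nat.factorial (L.get j) : ℝ) := by
        have hN : (∏ j, (L.get j).choose (z j)) * ((∏ j, Nat.factorial (z j)) *
            (∏ j, Nat.factorial (L.get j - z j))) = ∏ j, Nat.factorial (L.get j) := by
          rw [← Finset.prod_mul_distrib, ← Finset.prod_mul_distrib]
          refine Finset.prod_congr rfl fun j _ => ?_
          rw [← mul_assoc]
          exact Nat.choose_mul_factorial_mul_factorial (hlej j)
        exact_mod_cast hN
      have hcN : (((n + m).choose n : ℕ) : ℝ) *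
          ((Nat.factorial n : ℝ) * (Nat.factorial m : ℝ))
          = (Nat.factorial (n + m) : ℝ) := by
        have hN : (n + m).choose n * (Nat.factorial n * Nat.factorial m)
            = Nat.factorial (n + m) := by
          have hsymm : (n + m).choose n = (n + m).choose m := by
            have := Nat.choose_symm (Nat.le_add_left m n)
            simpa using this
          rw [← mul_assoc, hsymm]
          exact Nat.add_choose_mul_factorial_mul_factorial n m
        exact_mod_cast hN
      rw [div_mul_eq_mul_div, eq_div_iff (mul_ne_zero hPne hchne)]
      linear_combination ((((n + m).choose n : ℕ) : ℝ) *
          ((∏ j, (L.get j).choose (z j) : ℕ) : ℝ)) * hT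
        - ((Tcard z : ℝ) * (((n + m).choose n : ℕ) : ℝ)) * hCh
        + ((∏ j, (L.get j).choose (z j) : ℕ) : ℝ) * hcN
    -- put everything together
    apply mul_right_cancel₀ hKne
    have hL1 : (S.card : ℝ) * (K : ℝ) = ∑ z ∈ Z, (Tcard z : ℝ) := by
      rw [← Nat.cast_mul, ← hcount1, hcount2, Nat.cast_sum]
    rw [hL1, Finset.sum_congr rfl hterm, ← Finset.mul_sum, hHC, hCc]
    field_simp
  -- Step 3: conclude
  have hPSF : PSF α θ μ.parts = Cc μ.parts * V := by
    rw [PSF, hV, hNsum, mul_assoc]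
  rw [hSH, hPSF]
  ring

end
end

section
/- Restriction marginal of the Ewens–Pitman exchangeable partition law. Let 0 ≤ α < 1 and θ > −α, and let n, m ≥ 1 and ω ∈ 𝒫_n. Then Σ_{A set partition of {1,…,n+m} with shape(A|_{{1,…,n}}) = ω} EPPF_{α,θ}(A) = PSF_{α,θ}(ω). -/
open scoped Classical
open Finset

noncomputable section

namespace EPMarg
variable {X : Type*} [Fintype X] [DecidableEq X]
set_option linter.unusedSectionVars false

noncomputable def fpFintype (u : Finset X) : Fintype (Finpartition u) :=
  Fintype.ofInjective Finpartition.parts (fun a b h => by cases a; cases b; simpa using h)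

lemma risingFac_succ (a : ℝ) (b : ℕ) :
    risingFac a (b + 1) = risingFac a b * (a + b) := by
  rw [risingFac, Finset.prod_range_succ, risingFac]

/-- weight depending only on shape -/
def Wt (α θ : ℝ) (s : Multiset ℕ) : ℝ :=
  (∏ i ∈ Finset.range (Multiset.card s), (θ + i * α)) *
    (s.map fun p => risingFac (1 - α) (p - 1)).prod

def shp {u : Finset X} (P : Finpartition u) : Multiset ℕ := P.parts.val.map Finset.card

def rsh {u : Finset X} (P : Finpartition u) (B : Finset X) : Multiset ℕ :=
  ((P.parts.val.map (· ∩ B)).filter (· ≠ ∅)).map Finset.card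

lemma avoid_parts_of_mem {u : Finset X} (B : Finpartition u) {b : Finset X}
    (hb : b ∈ B.parts) : (B.avoid b).parts = B.parts.erase b := by
  ext c
  rw [Finpartition.mem_avoid, mem_erase]
  constructor
  · rintro ⟨d, hd, hdb, rfl⟩
    have hne : d ≠ b := by rintro rfl; exact hdb le_rfl
    have hdisj : Disjoint d b := B.disjoint hd hb hne
    rw [Finset.sdiff_eq_self_of_disjoint hdisj]
    exact ⟨hne, hd⟩
  · rintro ⟨hne, hc⟩
    refine ⟨c, hc, ?_, Finset.sdiff_eq_self_of_disjoint (B.disjoint hc hb hne)⟩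
    intro hle
    have hc0 : c = ∅ := by
      simpa using (B.disjoint hc hb hne).eq_bot_of_le hle
    subst hc0; exact B.bot_notMem hc

lemma insert_sdiff_singleton {u : Finset X} {x : X} (hx : x ∉ u) :
    (insert x u) \ {x} = u := by
  ext a
  simp only [mem_sdiff, mem_insert, mem_singleton]
  constructor
  · rintro ⟨h1 | h1, h2⟩
    · exact absurd h1 h2
    · exact h1
  · intro h; exact ⟨Or.inr h, fun h' => hx (h' ▸ h)⟩

def resP {u : Finset X} {x : X} (hx : x ∉ u) (A : Finpartition (insert x u)) :
    Finpartition u :=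
  (A.avoid {x}).copy (insert_sdiff_singleton hx)

lemma mem_resP {u : Finset X} {x : X} (hx : x ∉ u) (A : Finpartition (insert x u))
    {c : Finset X} :
    c ∈ (resP hx A).parts ↔ ∃ d ∈ A.parts, ¬d ⊆ {x} ∧ d \ {x} = c := by
  rw [resP, Finpartition.copy_parts, Finpartition.mem_avoid]

def ext0 {u : Finset X} {x : X} (hx : x ∉ u) (B : Finpartition u) :
    Finpartition (insert x u) :=
  B.extend (b := {x}) (by simp)
    (by simp [Finset.disjoint_singleton_right, hx])
    (by rw [sup_eq_union, union_comm, ← Finset.insert_eq])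

lemma ext0_parts {u : Finset X} {x : X} (hx : x ∉ u) (B : Finpartition u) :
    (ext0 hx B).parts = insert {x} B.parts := rfl

def extMod {u : Finset X} {x : X} (hx : x ∉ u) (B : Finpartition u) {b : Finset X}
    (hb : b ∈ B.parts) : Finpartition (insert x u) :=
  (B.avoid b).extend (b := insert x b)
    (by simp)
    (by rw [Finset.disjoint_left]
        rintro a ha h
        rcases mem_insert.1 h with rfl | h
        · exact hx (mem_sdiff.1 ha).1
        · exact (mem_sdiff.1 ha).2 h)
    (by rw [sup_eq_union]
        ext a
        have hbu : b ⊆ u := B.le hb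
        simp only [mem_union, mem_sdiff, mem_insert]
        constructor
        · rintro (⟨h, -⟩ | h)
          · exact Or.inr h
          · rcases h with rfl | h
            · exact Or.inl rfl
            · exact Or.inr (hbu h)
        · rintro (rfl | h)
          · exact Or.inr (Or.inl rfl)
          · by_cases hab : a ∈ b
            · exact Or.inr (Or.inr hab)
            · exact Or.inl ⟨h, hab⟩)

lemma extMod_parts {u : Finset X} {x : X} (hx : x ∉ u) (B : Finpartition u) {b : Finset X}
    (hb : b ∈ B.parts) :
    (extMod hx B hb).parts = insert (insert x b) (B.parts.erase b) := by
  rw [extMod, Finpartition.extend_parts, avoid_parts_of_mem B hb]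


-- basic facts about parts
lemma not_subset_singleton {u : Finset X} (B : Finpartition u) {x : X} (hx : x ∉ u)
    {d : Finset X} (hd : d ∈ B.parts) : ¬d ⊆ {x} := by
  intro hsub
  obtain ⟨a, ha⟩ := B.nonempty_of_mem_parts hd
  have : a = x := by simpa using hsub ha
  exact hx (B.le hd (this ▸ ha))

lemma not_mem_part {u : Finset X} (B : Finpartition u) {x : X} (hx : x ∉ u)
    {d : Finset X} (hd : d ∈ B.parts) : x ∉ d := fun h => hx (B.le hd h)

lemma sdiff_singleton_part {u : Finset X} (B : Finpartition u) {x : X} (hx : x ∉ u)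
    {d : Finset X} (hd : d ∈ B.parts) : d \ {x} = d :=
  Finset.sdiff_eq_self_of_disjoint (by simp [Finset.disjoint_singleton_right,
    not_mem_part B hx hd])

lemma resP_ext0 {u : Finset X} {x : X} (hx : x ∉ u) (B : Finpartition u) :
    resP hx (ext0 hx B) = B := by
  apply Finpartition.ext
  ext c
  rw [mem_resP hx, ext0_parts]
  constructor
  · rintro ⟨d, hd, hdx, rfl⟩
    rcases mem_insert.1 hd with rfl | hd
    · exact absurd (Finset.Subset.refl _) hdx
    · rwa [sdiff_singleton_part B hx hd]
  · intro hc
    exact ⟨c, mem_insert_of_mem hc, not_subset_singleton B hx hc,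
      sdiff_singleton_part B hx hc⟩

lemma x_not_mem_of_mem_parts {u : Finset X} (B : Finpartition u) {x : X} (hx : x ∉ u) :
    {x} ∉ B.parts := fun h => hx (B.le h (mem_singleton_self x))

lemma insert_x_not_mem_parts {u : Finset X} (B : Finpartition u) {x : X} (hx : x ∉ u)
    {b : Finset X} {s : Finset (Finset X)} (hs : s ⊆ B.parts) : insert x b ∉ s :=
  fun h => hx (B.le (hs h) (mem_insert_self x b))

lemma resP_extMod {u : Finset X} {x : X} (hx : x ∉ u) (B : Finpartition u) {b : Finset X}
    (hb : b ∈ B.parts) : resP hx (extMod hx B hb) = B := by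
  apply Finpartition.ext
  ext c
  rw [mem_resP hx, extMod_parts hx B hb]
  have hxb : x ∉ b := not_mem_part B hx hb
  constructor
  · rintro ⟨d, hd, hdx, rfl⟩
    rcases mem_insert.1 hd with rfl | hd
    · rw [Finset.insert_sdiff_of_mem _ (mem_singleton_self x),
        Finset.sdiff_eq_self_of_disjoint (by simp [Finset.disjoint_singleton_right, hxb])]
      exact hb
    · have hd' := Finset.mem_of_mem_erase hd
      rwa [sdiff_singleton_part B hx hd']
  · intro hc
    by_cases hcb : c = b
    · subst hcb
      refine ⟨insert x c, mem_insert_self _ _, ?_, ?_⟩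
      · intro hsub
        obtain ⟨a, ha⟩ := B.nonempty_of_mem_parts hc
        have : a = x := by simpa using hsub (mem_insert_of_mem ha)
        exact hxb (this ▸ ha)
      · rw [Finset.insert_sdiff_of_mem _ (mem_singleton_self x),
          Finset.sdiff_eq_self_of_disjoint (by simp [Finset.disjoint_singleton_right, hxb])]
    · exact ⟨c, mem_insert_of_mem (Finset.mem_erase.2 ⟨hcb, hc⟩),
        not_subset_singleton B hx hc, sdiff_singleton_part B hx hc⟩

/-- classification of partitions of `insert x u` over their restriction. -/
lemma fiber_classify {u : Finset X} {x : X} (hx : x ∉ u) (A : Finpartition (insert x u)) :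
    A = ext0 hx (resP hx A) ∨
      ∃ (b : Finset X) (hb : b ∈ (resP hx A).parts), A = extMod hx (resP hx A) hb := by
  have hxmem : x ∈ insert x u := mem_insert_self x u
  set c := A.part x with hcdef
  have hc : c ∈ A.parts := A.part_mem.2 hxmem
  have hxc : x ∈ c := A.mem_part hxmem
  have hother : ∀ d ∈ A.parts, d ≠ c → x ∉ d := by
    intro d hd hdc h
    exact hdc (A.eq_of_mem_parts hd hc h hxc)
  have hotherdiff : ∀ d ∈ A.parts, d ≠ c → d \ {x} = d := by
    intro d hd hdc
    exact Finset.sdiff_eq_self_of_disjoint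
      (by simp [Finset.disjoint_singleton_right, hother d hd hdc])
  have hothersub : ∀ d ∈ A.parts, d ≠ c → ¬d ⊆ {x} := by
    intro d hd hdc hsub
    obtain ⟨a, ha⟩ := A.nonempty_of_mem_parts hd
    have : a = x := by simpa using hsub ha
    exact hother d hd hdc (this ▸ ha)
  by_cases hcx : c = {x}
  · left
    have hres : (resP hx A).parts = A.parts.erase c := by
      ext e
      rw [mem_resP hx, mem_erase]
      constructor
      · rintro ⟨d, hd, hdx, rfl⟩
        have hdc : d ≠ c := fun h => hdx (by rw [h, hcx])
        rw [hotherdiff d hd hdc]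
        exact ⟨hdc, hd⟩
      · rintro ⟨hec, he⟩
        exact ⟨e, he, hothersub e he hec, hotherdiff e he hec⟩
    apply Finpartition.ext
    rw [ext0_parts, hres, ← hcx, Finset.insert_erase hc]
  · right
    have hbne : (c \ {x}).Nonempty := by
      rw [Finset.sdiff_nonempty]
      intro hsub
      exact hcx (Finset.Subset.antisymm hsub (by simpa using hxc))
    have hres : (resP hx A).parts = insert (c \ {x}) (A.parts.erase c) := by
      ext e
      rw [mem_resP hx, mem_insert, mem_erase]
      constructor
      · rintro ⟨d, hd, hdx, rfl⟩
        by_cases hdc : d = c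
        · subst hdc; exact Or.inl rfl
        · rw [hotherdiff d hd hdc]; exact Or.inr ⟨hdc, hd⟩
      · rintro (rfl | ⟨hec, he⟩)
        · refine ⟨c, hc, ?_, rfl⟩
          intro hsub
          exact hcx (Finset.Subset.antisymm hsub (by simpa using hxc))
        · exact ⟨e, he, hothersub e he hec, hotherdiff e he hec⟩
    have hbmem : c \ {x} ∈ (resP hx A).parts := by rw [hres]; exact mem_insert_self _ _
    refine ⟨c \ {x}, hbmem, ?_⟩
    apply Finpartition.ext
    rw [extMod_parts hx _ hbmem, hres]
    have hix : insert x (c \ {x}) = c := by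
      rw [Finset.sdiff_singleton_eq_erase, Finset.insert_erase hxc]
    have hbnotin : c \ {x} ∉ A.parts.erase c := by
      intro hmem
      have hmem' := Finset.mem_of_mem_erase hmem
      have hne : c \ {x} ≠ c := (Finset.mem_erase.1 hmem).1
      have hdisj := A.disjoint hmem' hc hne
      obtain ⟨a, ha⟩ := hbne
      exact (Finset.disjoint_left.1 hdisj) ha (Finset.mem_sdiff.1 ha).1
    rw [Finset.erase_insert hbnotin, hix, Finset.insert_erase hc]


lemma shp_ext0 {u : Finset X} {x : X} (hx : x ∉ u) (B : Finpartition u) :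
    shp (ext0 hx B) = 1 ::ₘ shp B := by
  rw [shp, ext0_parts, Finset.insert_val_of_notMem (x_not_mem_of_mem_parts B hx),
    Multiset.map_cons]
  simp [shp]

lemma shp_B_decomp {u : Finset X} (B : Finpartition u) {b : Finset X} (hb : b ∈ B.parts) :
    shp B = b.card ::ₘ (B.parts.val.erase b).map Finset.card := by
  rw [shp]
  conv_lhs => rw [← Multiset.cons_erase (show b ∈ B.parts.val from hb)]
  rw [Multiset.map_cons]

lemma shp_extMod {u : Finset X} {x : X} (hx : x ∉ u) (B : Finpartition u) {b : Finset X}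
    (hb : b ∈ B.parts) :
    shp (extMod hx B hb) = (b.card + 1) ::ₘ (B.parts.val.erase b).map Finset.card := by
  rw [shp, extMod_parts hx B hb,
    Finset.insert_val_of_notMem (insert_x_not_mem_parts B hx (Finset.erase_subset _ _)),
    Multiset.map_cons, Finset.erase_val,
    Finset.card_insert_of_notMem (not_mem_part B hx hb)]

lemma rsh_ext0 {u F : Finset X} {x : X} (hx : x ∉ u) (hxF : x ∉ F) (B : Finpartition u) :
    rsh (ext0 hx B) F = rsh B F := by
  rw [rsh, rsh, ext0_parts, Finset.insert_val_of_notMem (x_not_mem_of_mem_parts B hx),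
    Multiset.map_cons, Finset.singleton_inter_of_notMem hxF,
    Multiset.filter_cons_of_neg _ (by simp)]

lemma rsh_extMod {u F : Finset X} {x : X} (hx : x ∉ u) (hxF : x ∉ F) (B : Finpartition u)
    {b : Finset X} (hb : b ∈ B.parts) : rsh (extMod hx B hb) F = rsh B F := by
  rw [rsh, rsh, extMod_parts hx B hb,
    Finset.insert_val_of_notMem (insert_x_not_mem_parts B hx (Finset.erase_subset _ _)),
    Multiset.map_cons, Finset.erase_val, Finset.insert_inter_of_notMem hxF]
  conv_rhs => rw [← Multiset.cons_erase (show b ∈ B.parts.val from hb), Multiset.map_cons]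

lemma Wt_cons_one (α θ : ℝ) (t : Multiset ℕ) :
    Wt α θ (1 ::ₘ t) = (θ + (Multiset.card t) * α) * Wt α θ t := by
  rw [Wt, Wt, Multiset.card_cons, Finset.prod_range_succ, Multiset.map_cons,
    Multiset.prod_cons]
  norm_num [risingFac]
  ring

lemma Wt_cons_succ (α θ : ℝ) (t : Multiset ℕ) {p : ℕ} (hp : 1 ≤ p) :
    Wt α θ ((p + 1) ::ₘ t) = ((p : ℝ) - α) * Wt α θ (p ::ₘ t) := by
  rw [Wt, Wt, Multiset.card_cons, Multiset.card_cons, Multiset.map_cons, Multiset.map_cons,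
    Multiset.prod_cons, Multiset.prod_cons]
  have h1 : p + 1 - 1 = (p - 1) + 1 := by omega
  rw [h1, risingFac_succ]
  have h2 : ((p - 1 : ℕ) : ℝ) = (p : ℝ) - 1 := by
    rw [Nat.cast_sub hp]; norm_num
  rw [h2]
  ring

lemma ext0_ne_extMod {u : Finset X} {x : X} (hx : x ∉ u) (B : Finpartition u) {b : Finset X}
    (hb : b ∈ B.parts) : ext0 hx B ≠ extMod hx B hb := by
  intro h
  have h1 : ({x} : Finset X) ∈ (extMod hx B hb).parts := by
    rw [← h, ext0_parts]; exact mem_insert_self _ _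
  rw [extMod_parts hx B hb] at h1
  rcases mem_insert.1 h1 with h2 | h2
  · obtain ⟨a, ha⟩ := B.nonempty_of_mem_parts hb
    have ham : a ∈ ({x} : Finset X) := by rw [h2]; exact mem_insert_of_mem ha
    have hax : a = x := by simpa using ham
    exact (not_mem_part B hx hb) (hax ▸ ha)
  · exact x_not_mem_of_mem_parts B hx (Finset.mem_of_mem_erase h2)

lemma extMod_inj {u : Finset X} {x : X} (hx : x ∉ u) (B : Finpartition u) {b₁ b₂ : Finset X}
    (h₁ : b₁ ∈ B.parts) (h₂ : b₂ ∈ B.parts) (h : extMod hx B h₁ = extMod hx B h₂) :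
    b₁ = b₂ := by
  have hm : insert x b₁ ∈ (extMod hx B h₂).parts := by
    rw [← h, extMod_parts]; exact mem_insert_self _ _
  rw [extMod_parts] at hm
  rcases mem_insert.1 hm with h3 | h3
  · have := congrArg (fun s => Finset.erase s x) h3
    simpa [Finset.erase_insert (not_mem_part B hx h₁),
      Finset.erase_insert (not_mem_part B hx h₂)] using this
  · exact absurd h3 (insert_x_not_mem_parts B hx (Finset.erase_subset _ _))

lemma fiber_eq {u : Finset X} {x : X} (hx : x ∉ u) (B : Finpartition u)
    [Fintype (Finpartition (insert x u))] :
    (univ.filter fun A : Finpartition (insert x u) => resP hx A = B) =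
      insert (ext0 hx B) (B.parts.attach.image fun b => extMod hx B b.2) := by
  ext A
  simp only [mem_filter, mem_univ, true_and, mem_insert, Finset.mem_image, mem_attach,
    true_and, Subtype.exists]
  constructor
  · rintro rfl
    rcases fiber_classify hx A with h | ⟨b, hb, h⟩
    · exact Or.inl h
    · exact Or.inr ⟨b, hb, h.symm⟩
  · rintro (rfl | ⟨b, hb, rfl⟩)
    · exact resP_ext0 hx B
    · exact resP_extMod hx B hb

lemma step (α θ : ℝ) {u F : Finset X} {x : X} (hx : x ∉ u) (hxF : x ∉ F) (w : Multiset ℕ)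
    [Fintype (Finpartition (insert x u))] [Fintype (Finpartition u)] :
    ∑ A : Finpartition (insert x u), (if rsh A F = w then Wt α θ (shp A) else 0) =
      (θ + u.card) * ∑ B : Finpartition u, (if rsh B F = w then Wt α θ (shp B) else 0) := by
  rw [← Finset.sum_fiberwise_of_maps_to (g := resP hx) (t := univ)
    (fun A _ => mem_univ _) _, Finset.mul_sum]
  refine Finset.sum_congr rfl fun B _ => ?_
  rw [fiber_eq hx B]
  rw [Finset.sum_insert (by
    simp only [Finset.mem_image, mem_attach, true_and, Subtype.exists]
    rintro ⟨b, hb, h⟩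
    exact ext0_ne_extMod hx B hb h.symm)]
  rw [Finset.sum_image (by
    rintro ⟨b₁, h₁⟩ - ⟨b₂, h₂⟩ - h
    exact Subtype.ext (extMod_inj hx B h₁ h₂ h))]
  rw [rsh_ext0 hx hxF B]
  have hsum : ∀ bp : {b // b ∈ B.parts},
      (if rsh (extMod hx B bp.2) F = w then Wt α θ (shp (extMod hx B bp.2)) else 0) =
        (if rsh B F = w then ((bp.1.card : ℝ) - α) * Wt α θ (shp B) else 0) := by
    rintro ⟨b, hb⟩
    rw [rsh_extMod hx hxF B hb, shp_extMod hx B hb]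
    have h1 : 1 ≤ b.card := Finset.card_pos.2 (B.nonempty_of_mem_parts hb)
    rw [Wt_cons_succ α θ _ h1, ← shp_B_decomp B hb]
  rw [Finset.sum_congr rfl (fun bp _ => hsum bp)]
  by_cases hw : rsh B F = w
  · simp only [hw, if_true, shp_ext0 hx B, Wt_cons_one]
    rw [Finset.sum_attach B.parts (fun b => ((b.card : ℝ) - α) * Wt α θ (shp B)),
      ← Finset.sum_mul]
    have hsum2 : (∑ b ∈ B.parts, ((b.card : ℝ) - α)) =
        (u.card : ℝ) - (B.parts.card : ℝ) * α := by
      rw [Finset.sum_sub_distrib, Finset.sum_const, nsmul_eq_mul]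
      congr 1
      exact_mod_cast congrArg (Nat.cast (R := ℝ)) B.sum_card_parts
    have hk : (Multiset.card (shp B) : ℝ) = (B.parts.card : ℝ) := by
      rw [shp, Multiset.card_map]
      rfl
    rw [hsum2, hk]
    ring
  · simp [hw]


/-- denominator of `Cc`, in ℕ -/
def Dd (s : Multiset ℕ) : ℕ :=
  (s.map Nat.factorial).prod * ∏ j ∈ s.toFinset, (s.count j).factorial

lemma Dd_erase {s : Multiset ℕ} {p : ℕ} (hp : p ∈ s) :
    Dd s = p.factorial * s.count p * Dd (s.erase p) := by
  have hmap : (s.map Nat.factorial).prod = p.factorial * ((s.erase p).map Nat.factorial).prod := by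
    conv_lhs => rw [← Multiset.cons_erase hp]
    rw [Multiset.map_cons, Multiset.prod_cons]
  have hcount : ∏ j ∈ s.toFinset, (s.count j).factorial =
      s.count p * ∏ j ∈ s.toFinset, ((s.erase p).count j).factorial := by
    have hpmem : p ∈ s.toFinset := Multiset.mem_toFinset.2 hp
    rw [← Finset.mul_prod_erase _ _ hpmem, ← Finset.mul_prod_erase _ _ hpmem]
    have hfac : (s.count p).factorial = s.count p * ((s.erase p).count p).factorial := by
      rw [Multiset.count_erase_self]
      have h1 : 1 ≤ s.count p := Multiset.one_le_count_iff_mem.2 hp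
      conv_lhs => rw [← Nat.succ_pred_eq_of_pos h1]
      rw [Nat.factorial_succ]
      simp only [Nat.pred_eq_sub_one, Nat.sub_add_cancel h1]
    rw [hfac]
    have hrest : ∏ j ∈ s.toFinset.erase p, (s.count j).factorial =
        ∏ j ∈ s.toFinset.erase p, ((s.erase p).count j).factorial := by
      refine Finset.prod_congr rfl fun j hj => ?_
      rw [Multiset.count_erase_of_ne (Finset.mem_erase.1 hj).1]
    rw [hrest]
    ring
  have hsub : ∏ j ∈ s.toFinset, ((s.erase p).count j).factorial =
      ∏ j ∈ (s.erase p).toFinset, ((s.erase p).count j).factorial := by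
    symm
    refine Finset.prod_subset (Multiset.toFinset_subset.2 (s.erase_subset p)) ?_
    intro j _ hj
    rw [Multiset.count_eq_zero_of_notMem (fun h => hj (Multiset.mem_toFinset.2 h))]
    exact Nat.factorial_zero
  rw [Dd, Dd, hmap, hcount, hsub]
  ring

lemma countSP (N : ℕ) : ∀ (u : Finset X) [Fintype (Finpartition u)], u.card = N →
    ∀ s : Multiset ℕ, 0 ∉ s → s.sum = u.card →
    (univ.filter fun A : Finpartition u => shp A = s).card * Dd s =
      Nat.factorial u.card := by
  induction N using Nat.strong_induction_on with
  | _ N IH =>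
  intro u hFT hcard s h0 hsum
  by_cases hN : u.card = 0
  -- base case: empty ground set
  · have hu : u = ∅ := Finset.card_eq_zero.1 hN
    subst hu
    have hs : s = 0 := by
      by_contra hne
      obtain ⟨a, ha⟩ := Multiset.exists_mem_of_ne_zero hne
      have h1 : 1 ≤ a := Nat.one_le_iff_ne_zero.2 (fun h => h0 (h ▸ ha))
      have h2 := Multiset.single_le_sum (fun x _ => Nat.zero_le x) a ha
      rw [hsum] at h2
      omega
    subst hs
    have hall : ∀ A : Finpartition (∅ : Finset X), shp A = 0 := by
      intro A
      have hpe : A.parts = ∅ := Finpartition.parts_eq_empty_iff.2 rfl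
      rw [shp, hpe]
      rfl
    rw [Finset.filter_true_of_mem (fun A _ => hall A)]
    have hcard1 : (univ : Finset (Finpartition (∅ : Finset X))).card = 1 := by
      haveI : Unique (Finpartition (∅ : Finset X)) :=
        inferInstanceAs (Unique (Finpartition (⊥ : Finset X)))
      simp
    rw [hcard1]
    simp [Dd]
  -- inductive case
  · have hupos : 0 < u.card := Nat.pos_of_ne_zero hN
    obtain ⟨x, hxu⟩ := Finset.card_pos.1 hupos
    set n := u.card with hn
    set T := univ.filter (fun A : Finpartition u => shp A = s) with hT
    set t := u.powerset.filter (fun b => x ∈ b) with ht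
    have hmaps : ∀ A ∈ T, A.part x ∈ t := by
      intro A _
      rw [ht, mem_filter, Finset.mem_powerset]
      exact ⟨A.le (A.part_mem.2 hxu), A.mem_part hxu⟩
    have hfib := Finset.card_eq_sum_card_fiberwise hmaps
    have hkey : ∀ b ∈ t, (T.filter fun A => A.part x = b).card * Dd s =
        (if b.card ∈ s then
          (b.card).factorial * s.count b.card * (n - b.card).factorial else 0) := by
      intro b hb
      rw [ht, mem_filter, Finset.mem_powerset] at hb
      obtain ⟨hbu, hxb⟩ := hb
      have hbne : (b : Finset X) ≠ ⊥ := by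
        rw [Finset.bot_eq_empty, ← Finset.nonempty_iff_ne_empty]
        exact ⟨x, hxb⟩
      have hp1 : 1 ≤ b.card := Finset.card_pos.2 ⟨x, hxb⟩
      by_cases hps : b.card ∈ s
      · have hple : b.card ≤ n := by
          have := Multiset.single_le_sum (fun y _ => Nat.zero_le y) _ hps
          omega
        letI : Fintype (Finpartition (u \ b)) := fpFintype _
        have hdisj : Disjoint (u \ b) b := sdiff_disjoint
        have hsup : (u \ b) ⊔ b = u := sdiff_sup_cancel hbu
        have hbij : (T.filter fun A => A.part x = b).card =
            (univ.filter fun A' : Finpartition (u \ b) =>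
              shp A' = s.erase b.card).card := by
          refine Finset.card_bij' (fun A _ => A.avoid b)
            (fun A' _ => A'.extend hbne hdisj hsup) ?_ ?_ ?_ ?_
          · intro A hA
            rw [mem_filter] at hA
            obtain ⟨hA1, hA2⟩ := hA
            rw [hT, mem_filter] at hA1
            have hbmem : b ∈ A.parts := hA2 ▸ A.part_mem.2 hxu
            rw [mem_filter]
            refine ⟨mem_univ _, ?_⟩
            rw [shp, avoid_parts_of_mem A hbmem, Finset.erase_val,
              Multiset.map_erase_of_mem _ _ (Finset.mem_def.1 hbmem)]
            rw [show Multiset.map Finset.card A.parts.val = s from hA1.2]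
          · intro A' hA'
            rw [mem_filter] at hA'
            have hbnot : b ∉ A'.parts := by
              intro hmem
              exact (Finset.mem_sdiff.1 (A'.le hmem hxb)).2 hxb
            rw [mem_filter, hT, mem_filter]
            have hparts : (A'.extend hbne hdisj hsup).parts = insert b A'.parts :=
              Finpartition.extend_parts _ _ _ _
            refine ⟨⟨mem_univ _, ?_⟩, ?_⟩
            · rw [shp, hparts, Finset.insert_val_of_notMem hbnot, Multiset.map_cons]
              rw [show Multiset.map Finset.card A'.parts.val = s.erase b.card from hA'.2]
              exact Multiset.cons_erase hps
            · exact Finpartition.part_eq_of_mem _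
                (hparts ▸ mem_insert_self b A'.parts) hxb
          · intro A hA
            rw [mem_filter] at hA
            have hbmem : b ∈ A.parts := hA.2 ▸ A.part_mem.2 hxu
            apply Finpartition.ext
            rw [Finpartition.extend_parts, avoid_parts_of_mem A hbmem,
              Finset.insert_erase hbmem]
          · intro A' hA'
            have hbnot : b ∉ A'.parts := by
              intro hmem
              exact (Finset.mem_sdiff.1 (A'.le hmem hxb)).2 hxb
            apply Finpartition.ext
            rw [avoid_parts_of_mem _ (by
              rw [Finpartition.extend_parts]; exact mem_insert_self b A'.parts),
              Finpartition.extend_parts, Finset.erase_insert hbnot]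
        have hlt : (u \ b).card < N := by
          rw [Finset.card_sdiff_of_subset hbu]
          omega
        have h0' : (0 : ℕ) ∉ s.erase b.card := fun h => h0 (Multiset.mem_of_mem_erase h)
        have hsum_split : b.card + (s.erase b.card).sum = n := by
          rw [← Multiset.sum_cons, Multiset.cons_erase hps]
          exact hsum
        have hsum' : (s.erase b.card).sum = (u \ b).card := by
          rw [Finset.card_sdiff_of_subset hbu]
          omega
        have hIH := IH _ hlt (u \ b) rfl (s.erase b.card) h0' hsum'
        rw [Finset.card_sdiff_of_subset hbu] at hIH
        rw [if_pos hps, Dd_erase hps, hbij]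
        calc (univ.filter fun A' : Finpartition (u \ b) =>
              shp A' = s.erase b.card).card *
              ((b.card).factorial * s.count b.card * Dd (s.erase b.card))
            = (b.card).factorial * s.count b.card *
              ((univ.filter fun A' : Finpartition (u \ b) =>
                shp A' = s.erase b.card).card * Dd (s.erase b.card)) := by ring
          _ = (b.card).factorial * s.count b.card * (n - b.card).factorial := by
              rw [hIH]
      · have hemp : (T.filter fun A => A.part x = b) = ∅ := by
          rw [Finset.filter_eq_empty_iff]
          intro A hA hpart
          rw [hT, mem_filter] at hA
          have hbmem : b ∈ A.parts := hpart ▸ A.part_mem.2 hxu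
          exact hps (hA.2 ▸ Multiset.mem_map_of_mem Finset.card (Finset.mem_def.1 hbmem))
        rw [hemp, if_neg hps]
        simp
    -- assemble
    rw [hfib, Finset.sum_mul,
      Finset.sum_congr rfl (fun b hb => hkey b hb)]
    have hmaps2 : ∀ b ∈ t, b.card ∈ Finset.range (n + 1) := by
      intro b hb
      rw [ht, mem_filter, Finset.mem_powerset] at hb
      rw [Finset.mem_range]
      have := Finset.card_le_card hb.1
      omega
    rw [← Finset.sum_fiberwise_of_maps_to hmaps2
      (fun b => if b.card ∈ s then
        (b.card).factorial * s.count b.card * (n - b.card).factorial else 0)]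
    have hinner : ∀ p ∈ Finset.range (n + 1),
        (∑ b ∈ t.filter fun b => b.card = p,
          (if b.card ∈ s then
            (b.card).factorial * s.count b.card * (n - b.card).factorial else 0)) =
          (if p ∈ s then
            Nat.choose (n-1) (p-1) * (p.factorial * s.count p * (n - p).factorial)
          else 0) := by
      intro p _
      rw [Finset.sum_congr rfl (fun b hb => by
        rw [(Finset.mem_filter.1 hb).2] : ∀ b ∈ t.filter fun b => b.card = p, _ = _)]
      rw [Finset.sum_const, smul_eq_mul]
      by_cases hps : p ∈ s
      · have hp1 : 1 ≤ p := Nat.one_le_iff_ne_zero.2 (fun h => h0 (h ▸ hps))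
        have hple : p ≤ n := by
          have := Multiset.single_le_sum (fun y _ => Nat.zero_le y) _ hps
          omega
        have hcnt : (t.filter fun b => b.card = p).card = Nat.choose (n-1) (p-1) := by
          have : (t.filter fun b => b.card = p).card =
              (Finset.powersetCard (p-1) (u.erase x)).card := by
            refine Finset.card_bij' (fun b _ => b.erase x) (fun c _ => insert x c)
              ?_ ?_ ?_ ?_
            · intro b hb
              rw [mem_filter, ht, mem_filter, Finset.mem_powerset] at hb
              obtain ⟨⟨hbu, hxb⟩, hbp⟩ := hb
              rw [Finset.mem_powersetCard]
              exact ⟨Finset.erase_subset_erase x hbu,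
                by rw [Finset.card_erase_of_mem hxb, hbp]⟩
            · intro c hc
              rw [Finset.mem_powersetCard] at hc
              obtain ⟨hcsub, hcc⟩ := hc
              have hxc : x ∉ c := fun h => (Finset.mem_erase.1 (hcsub h)).1 rfl
              rw [mem_filter, ht, mem_filter, Finset.mem_powerset]
              refine ⟨⟨Finset.insert_subset hxu
                (hcsub.trans (Finset.erase_subset x u)), mem_insert_self x c⟩, ?_⟩
              rw [Finset.card_insert_of_notMem hxc, hcc]
              omega
            · intro b hb
              rw [mem_filter, ht, mem_filter] at hb
              exact Finset.insert_erase hb.1.2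
            · intro c hc
              rw [Finset.mem_powersetCard] at hc
              have hxc : x ∉ c := fun h => (Finset.mem_erase.1 (hc.1 h)).1 rfl
              exact Finset.erase_insert hxc
          rw [this, Finset.card_powersetCard, Finset.card_erase_of_mem hxu]
        rw [if_pos hps, if_pos hps, hcnt]
      · rw [if_neg hps, if_neg hps, mul_zero]
    rw [Finset.sum_congr rfl hinner]
    rw [← Finset.sum_filter]
    have hfilt : (Finset.range (n + 1)).filter (fun p => p ∈ s) = s.toFinset := by
      ext q
      rw [mem_filter, Finset.mem_range, Multiset.mem_toFinset]
      constructor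
      · exact fun h => h.2
      · intro h
        have := Multiset.single_le_sum (fun y _ => Nat.zero_le y) _ h
        exact ⟨by omega, h⟩
    rw [hfilt]
    have hterm : ∀ p ∈ s.toFinset,
        Nat.choose (n-1) (p-1) * (p.factorial * s.count p * (n - p).factorial) =
          s.count p * p * (n-1).factorial := by
      intro p hp
      rw [Multiset.mem_toFinset] at hp
      have hp1 : 1 ≤ p := Nat.one_le_iff_ne_zero.2 (fun h => h0 (h ▸ hp))
      have hple : p ≤ n := by
        have := Multiset.single_le_sum (fun y _ => Nat.zero_le y) _ hp
        omega
      have hcmf : Nat.choose (n-1) (p-1) * (p-1).factorial * (n-p).factorial =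
          (n-1).factorial := by
        have h := Nat.choose_mul_factorial_mul_factorial
          (show p - 1 ≤ n - 1 by omega)
        rwa [show n - 1 - (p - 1) = n - p by omega] at h
      have hpfac : p.factorial = p * (p-1).factorial := by
        conv_lhs => rw [show p = (p-1)+1 by omega]
        rw [Nat.factorial_succ, show p-1+1 = p by omega]
      calc Nat.choose (n-1) (p-1) * (p.factorial * s.count p * (n - p).factorial)
          = (Nat.choose (n-1) (p-1) * (p-1).factorial * (n-p).factorial) *
            (s.count p * p) := by rw [hpfac]; ring
        _ = s.count p * p * (n-1).factorial := by rw [hcmf]; ring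
    rw [Finset.sum_congr rfl hterm, ← Finset.sum_mul]
    have hsum_cnt : (∑ p ∈ s.toFinset, s.count p * p) = n := by
      have h := Finset.sum_multiset_map_count s (id : ℕ → ℕ)
      rw [Multiset.map_id] at h
      rw [← hsum]
      simpa [smul_eq_mul] using h.symm
    rw [hsum_cnt]
    exact Nat.mul_factorial_pred hupos.ne'


lemma Dd_pos (s : Multiset ℕ) : 0 < Dd s := by
  apply Nat.mul_pos
  · apply Multiset.prod_pos
    intro a ha
    obtain ⟨b, _, rfl⟩ := Multiset.mem_map.1 ha
    exact Nat.factorial_pos b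
  · exact Finset.prod_pos (fun j _ => Nat.factorial_pos _)

lemma rsh_self {u : Finset X} (B : Finpartition u) : rsh B u = shp B := by
  rw [rsh, shp]
  have h1 : B.parts.val.map (· ∩ u) = B.parts.val.map id :=
    Multiset.map_congr rfl (fun b hb => Finset.inter_eq_left.2 (B.le (Finset.mem_def.2 hb)))
  have h2 : Multiset.filter (fun b => b ≠ ∅) B.parts.val = B.parts.val :=
    Multiset.filter_eq_self.2 (fun b hb => B.ne_bot (Finset.mem_def.2 hb))
  rw [h1, Multiset.map_id, h2]

lemma sum_ground_congr {u u' : Finset X} (h : u = u')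
    (I : Fintype (Finpartition u)) (I' : Fintype (Finpartition u'))
    (f : (v : Finset X) → Finpartition v → ℝ) :
    ∑ A ∈ @univ (Finpartition u) I, f u A = ∑ A ∈ @univ (Finpartition u') I', f u' A := by
  subst h
  rw [Subsingleton.elim I I']

lemma marg (α θ : ℝ) (F : Finset X) (w : Multiset ℕ) (v : Finset X) :
    Disjoint F v →
    (∑ A ∈ @univ (Finpartition (F ∪ v)) (fpFintype _),
      (if rsh A F = w then Wt α θ (shp A) else 0)) =
      (∏ i ∈ Finset.range v.card, (θ + ((F.card : ℝ) + (i : ℝ)))) *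
        ∑ B ∈ @univ (Finpartition F) (fpFintype _),
          (if rsh B F = w then Wt α θ (shp B) else 0) := by
  induction v using Finset.induction_on with
  | empty =>
    intro _
    rw [sum_ground_congr (Finset.union_empty F) (fpFintype _) (fpFintype _)
      (fun v A => if rsh A F = w then Wt α θ (shp A) else 0)]
    simp
  | @insert a v ha IH =>
    intro hd
    have haF : a ∉ F := fun h => Finset.disjoint_left.1 hd h (mem_insert_self a v)
    have hdv : Disjoint F v := hd.mono_right (Finset.subset_insert a v)
    have hav : a ∉ F ∪ v := by
      rw [Finset.mem_union]
      rintro (h | h)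
      exacts [haF h, ha h]
    rw [sum_ground_congr (Finset.union_insert a F v) (fpFintype _) (fpFintype _)
      (fun v A => if rsh A F = w then Wt α θ (shp A) else 0)]
    rw [@step X _ _ α θ (F ∪ v) F a hav haF w (fpFintype _) (fpFintype _)]
    rw [IH hdv]
    rw [Finset.card_insert_of_notMem ha, Finset.prod_range_succ,
      Finset.card_union_of_disjoint hdv]
    push_cast
    ring


lemma EPPF_eq (α θ : ℝ) {N : ℕ} (A : SP N) :
    EPPF α θ A = Wt α θ (shp A) / risingFac θ N := by
  have h1 : Multiset.card (shp A) = A.parts.card := by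
    rw [shp, Multiset.card_map]
    rfl
  have h2 : ((shp A).map fun p => risingFac (1 - α) (p - 1)).prod =
      ∏ b ∈ A.parts, risingFac (1 - α) (b.card - 1) := by
    rw [shp, Multiset.map_map]
    rfl
  rw [EPPF, Wt, h1, h2, div_mul_eq_mul_div]

end EPMarg

/-- **Restriction marginal of the Ewens–Pitman exchangeable partition law**: the total
EPPF mass of set partitions of `{1,…,n+m}` whose restriction to `{1,…,n}` has shape `ω`
equals `PSF_{α,θ}(ω)`. -/
theorem eppf_restriction_marginal {α θ : ℝ} (hα0 : 0 ≤ α) (hα1 : α < 1) (hθ : -α < θ)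
    {n m : ℕ} (hn : 1 ≤ n) (hm : 1 ≤ m) (ω : Nat.Partition n) :
    ∑ A ∈ Finset.univ.filter
        (fun A : SP (n + m) => rshape A (firstBlock n m) = ω.parts),
      EPPF α θ A = PSF α θ ω.parts := by
  classical
  set F := firstBlock n m with hF
  set G := secondBlock n m with hG
  have hFG : Disjoint F G := by
    rw [Finset.disjoint_left]
    intro a haF haG
    rw [hF, firstBlock, mem_filter] at haF
    rw [hG, secondBlock, mem_filter] at haG
    omega
  have hUG : F ∪ G = univ := by
    ext a
    simp only [Finset.mem_union, hF, hG, firstBlock, secondBlock, mem_filter, mem_univ,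
      true_and, iff_true]
    omega
  have hFcard : F.card = n := by
    have hinj : Function.Injective (Fin.castAdd m : Fin n → Fin (n + m)) := by
      intro i j h
      apply Fin.ext
      simpa using congrArg Fin.val h
    have himg : F = (univ : Finset (Fin n)).image (Fin.castAdd m) := by
      ext a
      simp only [hF, firstBlock, mem_filter, mem_univ, true_and, Finset.mem_image]
      constructor
      · intro h
        exact ⟨⟨(a : ℕ), h⟩, by apply Fin.ext; simp⟩
      · rintro ⟨i, -, rfl⟩
        simpa using i.isLt
    rw [himg, Finset.card_image_of_injective _ hinj, card_univ, Fintype.card_fin]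
  have hGcard : G.card = m := by
    have h := Finset.card_union_of_disjoint hFG
    rw [hUG, card_univ, Fintype.card_fin] at h
    omega
  have h0 : (0 : ℕ) ∉ ω.parts := fun h => Nat.lt_irrefl 0 (ω.parts_pos h)
  have hωsum : ω.parts.sum = F.card := by rw [hFcard]; exact ω.parts_sum
  rw [Finset.sum_filter]
  have hstep1 : ∀ A : SP (n + m), (if rshape A F = ω.parts then EPPF α θ A else 0) =
      (if EPMarg.rsh A F = ω.parts then EPMarg.Wt α θ (EPMarg.shp A) else 0) /
        risingFac θ (n + m) := by
    intro A
    rw [show rshape A F = EPMarg.rsh A F from rfl]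
    split_ifs with h
    · exact EPMarg.EPPF_eq α θ A
    · rw [zero_div]
  rw [Finset.sum_congr rfl (fun A _ => hstep1 A), ← Finset.sum_div]
  have htrans := EPMarg.sum_ground_congr (u := (univ : Finset (Fin (n + m)))) (u' := F ∪ G)
      hUG.symm inferInstance (EPMarg.fpFintype _)
      (fun v A => if EPMarg.rsh A F = ω.parts then EPMarg.Wt α θ (EPMarg.shp A) else 0)
  rw [htrans, EPMarg.marg α θ F ω.parts G hFG]
  have hSeq : (∑ B ∈ @univ (Finpartition F) (EPMarg.fpFintype F),
        (if EPMarg.rsh B F = ω.parts then EPMarg.Wt α θ (EPMarg.shp B) else 0)) =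
      (((@univ (Finpartition F) (EPMarg.fpFintype F)).filter
        (fun B => EPMarg.shp B = ω.parts)).card : ℝ) * EPMarg.Wt α θ ω.parts := by
    have hb : ∀ B : Finpartition F,
        (if EPMarg.rsh B F = ω.parts then EPMarg.Wt α θ (EPMarg.shp B) else 0) =
          (if EPMarg.shp B = ω.parts then EPMarg.Wt α θ ω.parts else 0) := by
      intro B
      rw [EPMarg.rsh_self B]
      split_ifs with h
      · rw [h]
      · rfl
    rw [Finset.sum_congr rfl (fun B _ => hb B), ← Finset.sum_filter, Finset.sum_const,
      nsmul_eq_mul]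
  have hcount := @EPMarg.countSP (Fin (n + m)) _ _ F.card F (EPMarg.fpFintype F) rfl
    ω.parts h0 hωsum
  rw [hFcard] at hcount
  have hθ1 : (-1 : ℝ) < θ := by linarith
  have hQpos : (0 : ℝ) < ∏ i ∈ Finset.range m, (θ + ((n : ℝ) + (i : ℝ))) := by
    apply Finset.prod_pos
    intro i _
    have h1 : (1 : ℝ) ≤ (n : ℝ) := by exact_mod_cast hn
    have h2 : (0 : ℝ) ≤ (i : ℝ) := Nat.cast_nonneg i
    linarith
  have hrf : risingFac θ (n + m) =
      risingFac θ n * ∏ i ∈ Finset.range m, (θ + ((n : ℝ) + (i : ℝ))) := by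
    rw [risingFac, Finset.prod_range_add]
    congr 1
    apply Finset.prod_congr rfl
    intro i _
    push_cast
    ring
  rw [hSeq, hGcard, hFcard, hrf]
  have hDd : ((EPMarg.Dd ω.parts : ℕ) : ℝ) ≠ 0 :=
    Nat.cast_ne_zero.2 (EPMarg.Dd_pos _).ne'
  have hCc : Cc ω.parts = ((Nat.factorial n : ℕ) : ℝ) / ((EPMarg.Dd ω.parts : ℕ) : ℝ) := by
    rw [Cc, EPMarg.Dd, ω.parts_sum]
    push_cast
    ring
  have hNsp : ((((@univ (Finpartition F) (EPMarg.fpFintype F)).filter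
      (fun B => EPMarg.shp B = ω.parts)).card : ℕ) : ℝ) = Cc ω.parts := by
    rw [hCc, eq_div_iff hDd]
    exact_mod_cast hcount
  rw [hNsp]
  have hPSF : PSF α θ ω.parts = Cc ω.parts * EPMarg.Wt α θ ω.parts / risingFac θ n := by
    rw [PSF, EPMarg.Wt, ω.parts_sum]
    ring
  rw [hPSF]
  rw [mul_comm (∏ i ∈ Finset.range m, (θ + ((n : ℝ) + (i : ℝ)))) _,
    mul_div_mul_right _ _ hQpos.ne']


end
end

section
/- The Ewens–Pitman sampling formula as the shape law of the exchangeable partition probability function. Let 0 ≤ α < 1 and θ > −α, and let π ∈ 𝒫_n with n ≥ 1. Then Σ_{A set partition of {1,…,n} with shape(A) = π} EPPF_{α,θ}(A) = PSF_{α,θ}(π); equivalently, the number of set partitions of {1,…,n} with shape π equals C(π), and each such set partition receives the same EPPF weight. -/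
open scoped Classical
open Finset

noncomputable section

/-!
Index the parts of `π` by a type `ι` and count the maps `f : {1, …, n} → ι` whose fibre over `i`
has the prescribed size `l i` in two ways. The permutations of `{1, …, n}` act transitively on
them, with stabiliser `∏ᵢ Perm (f⁻¹ i)`, so there are `n! / ∏ᵢ (l i)!` of them. On the other hand,
sending `f` to the set partition into its fibres hits every set partition of shape `π`, and the
maps over a fixed set partition correspond to the size-preserving bijections `ι ≃ parts`, a
torsor under the group of permutations of `ι` preserving `l`, of order `∏ⱼ aⱼ(π)!`. Hence there
are `C(π)` set partitions of shape `π`; the EPPF weight depends on the shape only, and summing it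
gives `PSF`.
-/

open Equiv Function

section FiberCard

variable {α β δ : Type*}

theorem exists_equiv_comp_eq_of_card_fiber_eq [Finite α] [Finite β] (u : α → δ) (v : β → δ)
    (h : ∀ d, Nat.card {a // u a = d} = Nat.card {b // v b = d}) :
    ∃ e : α ≃ β, v ∘ e = u :=
  ⟨ofFiberEquiv fun d => (Finite.card_eq.mp (h d)).some, funext (ofFiberEquiv_map _)⟩

theorem card_equiv_comp_eq {u : α → δ} {v : β → δ} (e₀ : α ≃ β) (h₀ : v ∘ e₀ = u) :
    Nat.card {e : α ≃ β // v ∘ e = u} = Nat.card {σ : Perm α // u ∘ σ = u} := by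
  subst h₀
  refine Nat.card_congr (subtypeEquiv ((Equiv.refl α).equivCongr e₀.symm) fun e => ?_)
  simp [funext_iff]

end FiberCard

namespace Finset

variable {α ι : Type*} [Fintype α]

def fiber (f : α → ι) (i : ι) : Finset α := {a | f a = i}

@[simp]
theorem mem_fiber {f : α → ι} {i : ι} {a : α} : a ∈ fiber f i ↔ f a = i := by
  simp [fiber]

theorem card_fiber (f : α → ι) (i : ι) : #(fiber f i) = Nat.card {a // f a = i} := by
  rw [Nat.card_eq_fintype_card, Fintype.card_subtype, fiber]

end Finset

abbrev MapsWithFiberCard (α : Type*) [Fintype α] {ι : Type*} (l : ι → ℕ) : Type _ :=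
  {f : α → ι // ∀ i, #(fiber f i) = l i}

section MapsWithFiberCard

variable {α ι : Type*} [Fintype α]

theorem nonempty_mapsWithFiberCard [Fintype ι] {l : ι → ℕ} (hl : ∑ i, l i = Fintype.card α) :
    Nonempty (MapsWithFiberCard α l) := by
  obtain ⟨e⟩ : Nonempty (α ≃ Σ i, Fin (l i)) := Fintype.card_eq.mp (by simp [hl])
  refine ⟨⟨fun a => (e a).1, fun i => ?_⟩⟩
  rw [card_fiber, Nat.card_congr ((e.subtypeEquiv fun _ => Iff.rfl).trans (sigmaSubtype i)),
    Nat.card_fin]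

theorem card_mapsWithFiberCard_mul_prod_factorial [DecidableEq α] [Fintype ι] {l : ι → ℕ}
    (hl : ∑ i, l i = Fintype.card α) :
    Fintype.card (MapsWithFiberCard α l) * ∏ i, (l i).factorial = (Fintype.card α).factorial := by
  obtain ⟨base, hbase⟩ := nonempty_mapsWithFiberCard hl
  let φ : Perm α → MapsWithFiberCard α l := fun σ =>
    ⟨base ∘ σ, fun i => by
      rw [card_fiber, ← hbase, card_fiber]
      exact Nat.card_congr (σ.subtypeEquiv fun _ => Iff.rfl)⟩
  have card_fiber_φ (f : MapsWithFiberCard α l) :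
      Fintype.card {σ // φ σ = f} = ∏ i, (l i).factorial := by
    obtain ⟨e₀, he₀⟩ := exists_equiv_comp_eq_of_card_fiber_eq f.1 base
      fun i => by rw [← card_fiber, ← card_fiber, f.2, hbase]
    rw [Fintype.card_congr (subtypeEquivRight fun _ => Subtype.ext_iff), ← Nat.card_eq_fintype_card,
      card_equiv_comp_eq e₀ he₀, Nat.card_eq_fintype_card, DomMulAct.stabilizer_card]
    simp_rw [← Nat.card_eq_fintype_card, ← card_fiber, f.2]
  calc Fintype.card (MapsWithFiberCard α l) * ∏ i, (l i).factorial
      = ∑ f, Fintype.card {σ // φ σ = f} := by simp [card_fiber_φ]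
    _ = (Fintype.card α).factorial := by
        rw [← Fintype.card_sigma, Fintype.card_congr (sigmaFiberEquiv φ), Fintype.card_perm]

theorem surjective_of_mapsWithFiberCard {l : ι → ℕ} (hl : ∀ i, 0 < l i)
    (f : MapsWithFiberCard α l) : Surjective f.1 := fun i => by
  obtain ⟨a, ha⟩ := card_pos.mp ((hl i).trans_eq (f.2 i).symm)
  exact ⟨a, mem_fiber.mp ha⟩

end MapsWithFiberCard

namespace Finpartition

variable {α ι : Type*} [Fintype α] [DecidableEq α] {f : α → ι}

theorem parts_ofSetoid_ker [Fintype ι] (hf : Surjective f) :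
    (ofSetoid (Setoid.ker f)).parts = univ.image (fiber f) := by
  ext t
  simp only [ofSetoid, ofSetSetoid_parts, mem_image, mem_univ, true_and, Setoid.ker_def]
  constructor
  · rintro ⟨a, rfl⟩
    exact ⟨f a, by ext; simp [eq_comm]⟩
  · rintro ⟨i, rfl⟩
    obtain ⟨a, rfl⟩ := hf i
    exact ⟨a, by ext; simp [eq_comm]⟩

theorem ofSetoid_ker_eq_iff [Fintype ι] (hf : Surjective f) (A : Finpartition (univ : Finset α)) :
    ofSetoid (Setoid.ker f) = A ↔ ∀ i, fiber f i ∈ A.parts := by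
  rw [Finpartition.ext_iff, parts_ofSetoid_ker hf]
  refine ⟨fun h i => h ▸ mem_image_of_mem _ (mem_univ i), fun h => ?_⟩
  ext t
  refine ⟨fun ht => ?_, fun ht => ?_⟩
  · obtain ⟨i, -, rfl⟩ := mem_image.mp ht
    exact h i
  · obtain ⟨a, ha⟩ := A.nonempty_of_mem_parts ht
    rw [← A.eq_of_mem_parts (h (f a)) ht (by simp) ha]
    exact mem_image_of_mem _ (mem_univ _)

theorem bijective_fiber_of_mem_parts {A : Finpartition (univ : Finset α)}
    (h : ∀ i, fiber f i ∈ A.parts) :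
    Bijective fun i => (⟨fiber f i, h i⟩ : A.parts) := by
  refine ⟨fun i j hij => ?_, fun ⟨t, ht⟩ => ?_⟩
  · obtain ⟨a, ha⟩ := A.nonempty_of_mem_parts (h i)
    have hfib : fiber f i = fiber f j := congrArg Subtype.val hij
    have hb : a ∈ fiber f j := hfib ▸ ha
    exact (mem_fiber.mp ha).symm.trans (mem_fiber.mp hb)
  · obtain ⟨a, ha⟩ := A.nonempty_of_mem_parts ht
    exact ⟨f a, Subtype.ext (A.eq_of_mem_parts (h (f a)) ht (by simp) ha)⟩

def fibersMemPartsEquiv (A : Finpartition (univ : Finset α)) :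
    {f : α → ι // ∀ i, fiber f i ∈ A.parts} ≃ (ι ≃ A.parts) where
  toFun f := Equiv.ofBijective _ (bijective_fiber_of_mem_parts f.2)
  invFun g := ⟨fun a => g.symm ⟨A.part a, by simp⟩, fun i => by
    convert (g i).2 using 1
    ext a
    simp [symm_apply_eq, Subtype.ext_iff, A.part_eq_iff_mem (g i).2]⟩
  left_inv f := by
    ext a
    simp [symm_apply_eq, Subtype.ext_iff, A.part_eq_iff_mem (f.2 _)]
  right_inv g := by
    ext i a
    simp [symm_apply_eq, Subtype.ext_iff, A.part_eq_iff_mem (g i).2]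

end Finpartition

theorem Nat.card_subtype_eq_count {ι γ : Type*} [Fintype ι] [DecidableEq γ] (u : ι → γ) (c : γ) :
    Nat.card {i // u i = c} = (univ.val.map u).count c := by
  rw [← card_fiber, Multiset.count_map, fiber, card_def, filter_val]
  simp_rw [eq_comm]

theorem map_card_univ_parts {N : ℕ} (A : SP N) :
    (univ : Finset A.parts).val.map (fun b => (b.1 : Finset (Fin N)).card) = shape A := by
  rw [univ_eq_attach, attach_val, shape]
  exact Multiset.attach_map_val' _ _

section ShapeCount

variable {n : ℕ} {ι : Type*} [Fintype ι] {l : ι → ℕ}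

theorem shape_ofSetoid_ker (hl : ∀ i, 0 < l i) (f : MapsWithFiberCard (Fin n) l) :
    shape (Finpartition.ofSetoid (Setoid.ker f.1)) = univ.val.map l := by
  have hf := surjective_of_mapsWithFiberCard hl f
  have hinj : Injective (fiber f.1) := fun i j h => by
    obtain ⟨a, rfl⟩ := hf i
    exact (mem_fiber.mp (h ▸ mem_fiber.mpr rfl : a ∈ fiber f.1 j))
  rw [shape, Finpartition.parts_ofSetoid_ker hf, image_val_of_injOn hinj.injOn, Multiset.map_map]
  exact Multiset.map_congr rfl fun i _ => f.2 i

theorem card_sizePreserving_equiv_parts (A : SP n) (hA : shape A = univ.val.map l) :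
    Fintype.card {g : ι ≃ A.parts // ∀ i, (g i).1.card = l i} =
      ∏ j ∈ (univ.val.map l).toFinset, ((univ.val.map l).count j).factorial := by
  have hcount (j : ℕ) :
      Nat.card {i // l i = j} = Nat.card {b : A.parts // b.1.card = j} := by
    rw [Nat.card_subtype_eq_count, Nat.card_subtype_eq_count, map_card_univ_parts, hA]
  obtain ⟨e₀, he₀⟩ := exists_equiv_comp_eq_of_card_fiber_eq l (fun b : A.parts => b.1.card) hcount
  calc Fintype.card {g : ι ≃ A.parts // ∀ i, (g i).1.card = l i}
      = Fintype.card {g : ι ≃ A.parts // (fun b : A.parts => b.1.card) ∘ g = l} :=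
        Fintype.card_congr (subtypeEquivRight fun g => funext_iff.symm)
    _ = _ := by
        rw [← Nat.card_eq_fintype_card, card_equiv_comp_eq e₀ he₀, Nat.card_eq_fintype_card,
          DomMulAct.stabilizer_card']
        refine prod_congr rfl fun j _ => ?_
        rw [← Nat.card_eq_fintype_card, Nat.card_subtype_eq_count]

theorem card_mapsWithFiberCard_eq (hl : ∀ i, 0 < l i) :
    Fintype.card (MapsWithFiberCard (Fin n) l) =
      Fintype.card {A : SP n // shape A = univ.val.map l} *
        ∏ j ∈ (univ.val.map l).toFinset, ((univ.val.map l).count j).factorial := by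
  let Ψ (f : MapsWithFiberCard (Fin n) l) : {A : SP n // shape A = univ.val.map l} :=
    ⟨Finpartition.ofSetoid (Setoid.ker f.1), shape_ofSetoid_ker hl f⟩
  have card_fiber_Ψ (A : {A : SP n // shape A = univ.val.map l}) :
      Fintype.card {f // Ψ f = A} =
        ∏ j ∈ (univ.val.map l).toFinset, ((univ.val.map l).count j).factorial := by
    rw [← card_sizePreserving_equiv_parts A.1 A.2]
    refine Fintype.card_congr <| (subtypeSubtypeEquivSubtypeExists _ _).trans <|
      (subtypeEquivRight fun f => ?_).trans <|
      (subtypeSubtypeEquivSubtypeInter (fun f : Fin n → ι => ∀ i, fiber f i ∈ A.1.parts)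
        (fun f => ∀ i, #(fiber f i) = l i)).symm.trans <|
      subtypeEquiv (Finpartition.fibersMemPartsEquiv A.1) fun f => Iff.rfl
    have hΨ (h : ∀ i, #(fiber f i) = l i) : Ψ ⟨f, h⟩ = A ↔ ∀ i, fiber f i ∈ A.1.parts :=
      Subtype.ext_iff.trans <|
        Finpartition.ofSetoid_ker_eq_iff (surjective_of_mapsWithFiberCard hl ⟨f, h⟩) A.1
    exact ⟨fun ⟨h, hA⟩ => ⟨(hΨ h).mp hA, h⟩, fun ⟨hA, h⟩ => ⟨h, (hΨ h).mpr hA⟩⟩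
  rw [← Fintype.card_congr (sigmaFiberEquiv Ψ), Fintype.card_sigma]
  simp [card_fiber_Ψ]

end ShapeCount

theorem card_shape_mul_prod_factorial {n : ℕ} (s : Multiset ℕ) (hpos : ∀ p ∈ s, 0 < p)
    (hsum : s.sum = n) :
    Fintype.card {A : SP n // shape A = s} * (∏ j ∈ s.toFinset, (s.count j).factorial) *
      (s.map Nat.factorial).prod = n.factorial := by
  let l : s → ℕ := fun p => p
  have hmap : univ.val.map l = s := Multiset.map_univ_coe s
  have hl : ∑ p, l p = Fintype.card (Fin n) := by
    rw [sum_eq_multiset_sum, hmap, hsum, Fintype.card_fin]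
  have hfac : ∏ p, (l p).factorial = (s.map Nat.factorial).prod := by
    rw [prod_eq_multiset_prod]
    exact congrArg Multiset.prod (Multiset.map_univ_comp_coe s Nat.factorial)
  have hcard := card_mapsWithFiberCard_eq (n := n) (l := l) fun _ => hpos _ Multiset.coe_mem
  rw [hmap] at hcard
  rw [← hcard, ← hfac, card_mapsWithFiberCard_mul_prod_factorial hl, Fintype.card_fin]

theorem card_filter_shape_eq_Cc {n : ℕ} (s : Multiset ℕ) (hpos : ∀ p ∈ s, 0 < p)
    (hsum : s.sum = n) :
    (#(univ.filter fun A : SP n => shape A = s) : ℝ) = Cc s := by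
  have hfac : 0 < (s.map Nat.factorial).prod := Multiset.prod_pos fun _ h => by
    obtain ⟨p, -, rfl⟩ := Multiset.mem_map.mp h
    exact p.factorial_pos
  rw [Cc, hsum, eq_div_iff (by positivity), ← card_shape_mul_prod_factorial s hpos hsum,
    ← Fintype.card_subtype]
  push_cast
  ring

def shapeEPPF (α θ : ℝ) (N : ℕ) (s : Multiset ℕ) : ℝ :=
  (∏ i ∈ range s.card, (θ + i * α)) / risingFac θ N *
    (s.map fun p => risingFac (1 - α) (p - 1)).prod

theorem EPPF_eq_shapeEPPF (α θ : ℝ) {N : ℕ} (A : SP N) :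
    EPPF α θ A = shapeEPPF α θ N (shape A) := by
  rw [EPPF, shapeEPPF, shape, Multiset.card_map, Multiset.map_map, prod_eq_multiset_prod]
  rfl

theorem PSF_eq_Cc_mul_shapeEPPF (α θ : ℝ) (s : Multiset ℕ) :
    PSF α θ s = Cc s * shapeEPPF α θ s.sum s := by
  rw [PSF, shapeEPPF, mul_assoc]

theorem psf_is_shape_law_general {α θ : ℝ} {n : ℕ} (π : Nat.Partition n) :
    (∑ A ∈ Finset.univ.filter (fun A : SP n => shape A = π.parts), EPPF α θ A
        = PSF α θ π.parts) ∧
    (((Finset.univ.filter (fun A : SP n => shape A = π.parts)).card : ℝ) = Cc π.parts) ∧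
    (∀ A ∈ Finset.univ.filter (fun A : SP n => shape A = π.parts),
      ∀ B ∈ Finset.univ.filter (fun A : SP n => shape A = π.parts),
        EPPF α θ A = EPPF α θ B) := by
  have hcard := card_filter_shape_eq_Cc π.parts (fun _ => π.parts_pos) π.parts_sum
  have hEPPF : ∀ A ∈ univ.filter (fun A : SP n => shape A = π.parts),
      EPPF α θ A = shapeEPPF α θ n π.parts := fun A hA => by
    rw [EPPF_eq_shapeEPPF, (mem_filter.mp hA).2]
  refine ⟨?_, hcard, fun A hA B hB => by rw [hEPPF A hA, hEPPF B hB]⟩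
  rw [sum_congr rfl hEPPF, sum_const, nsmul_eq_mul, hcard, PSF_eq_Cc_mul_shapeEPPF, π.parts_sum]

/-- **The Ewens–Pitman sampling formula as the shape law of the EPPF**: the total EPPF
mass of set partitions of `{1,…,n}` with shape `π` equals `PSF_{α,θ}(π)`; equivalently,
there are exactly `C(π)` set partitions of shape `π`, each receiving the same EPPF
weight. -/
theorem psf_is_shape_law {α θ : ℝ} (hα0 : 0 ≤ α) (hα1 : α < 1) (hθ : -α < θ)
    {n : ℕ} (hn : 1 ≤ n) (π : Nat.Partition n) :
    (∑ A ∈ Finset.univ.filter (fun A : SP n => shape A = π.parts), EPPF α θ A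
        = PSF α θ π.parts) ∧
    (((Finset.univ.filter (fun A : SP n => shape A = π.parts)).card : ℝ) = Cc π.parts) ∧
    (∀ A ∈ Finset.univ.filter (fun A : SP n => shape A = π.parts),
      ∀ B ∈ Finset.univ.filter (fun A : SP n => shape A = π.parts),
        EPPF α θ A = EPPF α θ B) :=
  psf_is_shape_law_general π

end
end

section
/- Chapman–Kolmogorov property of uniform subsampling of partitions (consistency of the pure-death dynamics on partitions). For every μ ∈ 𝒫_N, every ω ∈ 𝒫_n, and every intermediate size n ≤ r ≤ N with n ≥ 1, H(ω | μ) = Σ_{η ∈ 𝒫_r} H(η | μ) · H(ω | η), with the convention H(ω | ω) = 1. -/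
open scoped Classical
open Finset

noncomputable section

/-- The subsampling coefficient `H(ω | μ)`: the probability that removing `|μ| − |ω|`
uniformly chosen items from a configuration of shape `μ` leaves the shape `ω`. -/
def Hsub (ω μ : Multiset ℕ) : ℝ :=
  ((μ.sum.choose ω.sum : ℕ) : ℝ)⁻¹ *
    ∑ᶠ y : Fin μ.toList.length → ℕ,
      if (∀ i, y i ≤ μ.toList.get i) ∧ (∑ i, y i) = ω.sum ∧ nzMulti y = ω then
        ((∏ i : Fin μ.toList.length, (μ.toList.get i).choose (y i) : ℕ) : ℝ)
      else 0

def A3 {k : ℕ} (ω : Multiset ℕ) (M : Fin k → ℕ) : ℝ :=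
  ∑ y ∈ Fintype.piFinset (fun i => Finset.range (M i + 1)),
    if nzMulti y = ω then ∏ i, ((M i).choose (y i) : ℝ) else 0

def A2 (ω : Multiset ℕ) (L : List ℕ) : ℝ := A3 ω L.get

lemma sum_piFinset_succ {M : Type*} [AddCommMonoid M] {k : ℕ} (t : Fin (k+1) → Finset ℕ)
    (F : (Fin (k+1) → ℕ) → M) :
    ∑ f ∈ Fintype.piFinset t, F f
      = ∑ x ∈ t 0, ∑ g ∈ Fintype.piFinset (fun i => t i.succ), F (Fin.cons x g) := by
  rw [← Finset.sum_product']
  apply Finset.sum_nbij' (fun f => (f 0, fun i => f i.succ)) (fun p => Fin.cons p.1 p.2)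
  · intro f hf
    simp only [Fintype.mem_piFinset] at hf
    simp only [Finset.mem_product, Fintype.mem_piFinset]
    exact ⟨hf 0, fun i => hf i.succ⟩
  · intro p hp
    simp only [Finset.mem_product, Fintype.mem_piFinset] at hp
    simp only [Fintype.mem_piFinset]
    intro i
    induction i using Fin.cases with
    | zero => simpa using hp.1
    | succ i => simpa using hp.2 i
  · intro f _; exact Fin.cons_self_tail f
  · intro p _; simp
  · intro f _; simp only []
    rw [show (fun i => f i.succ) = Fin.tail f from rfl, Fin.cons_self_tail]

lemma nzMulti_cons {k : ℕ} (x : ℕ) (g : Fin k → ℕ) :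
    nzMulti (Fin.cons x g) = (if x = 0 then 0 else {x}) + nzMulti g := by
  unfold nzMulti
  rw [List.ofFn_succ]
  simp only [Fin.cons_zero, Fin.cons_succ]
  rw [← Multiset.cons_coe, Multiset.filter_cons]
  congr 1
  split_ifs with h1 h2 h2 <;> simp_all [Multiset.cons_eq_cons]

lemma nzMulti_sum {k : ℕ} (y : Fin k → ℕ) : (nzMulti y).sum = ∑ i, y i := by
  induction k with
  | zero => simp [nzMulti, List.ofFn_zero]
  | succ k ih =>
      rw [← Fin.cons_self_tail y, nzMulti_cons, Multiset.sum_add, Fin.sum_univ_succ]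
      simp only [Fin.cons_zero, Fin.cons_succ, ih]
      split_ifs with h <;> simp [h, Fin.tail]

lemma cons_eq_iff {x : ℕ} {s ω : Multiset ℕ} : x ::ₘ s = ω ↔ x ∈ ω ∧ s = ω.erase x := by
  constructor
  · rintro rfl; exact ⟨Multiset.mem_cons_self _ _, (Multiset.erase_cons_head _ _).symm⟩
  · rintro ⟨h1, rfl⟩; exact Multiset.cons_erase h1

lemma A3_cons {k : ℕ} (ω : Multiset ℕ) (a : ℕ) (M : Fin k → ℕ) :
    A3 ω (Fin.cons a M) = ∑ x ∈ Finset.range (a+1), (a.choose x : ℝ) *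
      (if x = 0 then A3 ω M else if x ∈ ω then A3 (ω.erase x) M else 0) := by
  unfold A3
  rw [sum_piFinset_succ]
  apply Finset.sum_congr (by simp)
  intro x hx
  have hsingle : ∀ s : Multiset ℕ, ({x} : Multiset ℕ) + s = x ::ₘ s := by
    intro s; rw [Multiset.singleton_add]
  simp only [Fin.prod_univ_succ, Fin.cons_zero, Fin.cons_succ, nzMulti_cons]
  by_cases hx0 : x = 0
  · subst hx0
    simp only [if_true, eq_self_iff_true, zero_add, Nat.choose_zero_right, Nat.cast_one, one_mul, mul_ite, mul_zero]
  · rw [if_neg hx0]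
    simp only [hsingle]
    by_cases hmem : x ∈ ω
    · rw [if_neg hx0, if_pos hmem, Finset.mul_sum]
      apply Finset.sum_congr rfl
      intro g _
      by_cases h : nzMulti g = ω.erase x
      · rw [if_pos (by rw [h]; exact Multiset.cons_erase hmem), if_pos h]
      · rw [if_neg (by rw [cons_eq_iff]; tauto), if_neg h, mul_zero]
    · rw [if_neg hx0, if_neg hmem, mul_zero, Finset.sum_eq_zero]
      intro g _
      rw [if_neg (by rw [cons_eq_iff]; tauto)]

lemma ofFn_coe {k : ℕ} (f : Fin k → ℕ) :
    (↑(List.ofFn f) : Multiset ℕ) = Multiset.map f (Finset.univ : Finset (Fin k)).val := by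
  rw [List.ofFn_eq_map]
  rfl

lemma nzMulti_comp_equiv {k k' : ℕ} (e : Fin k' ≃ Fin k) (g : Fin k → ℕ) :
    nzMulti (g ∘ e) = nzMulti g := by
  unfold nzMulti
  congr 1
  rw [ofFn_coe, ofFn_coe]
  have : Multiset.map (g ∘ e) (Finset.univ : Finset (Fin k')).val
      = Multiset.map g (Multiset.map (⇑e) (Finset.univ : Finset (Fin k')).val) := by
    rw [Multiset.map_map]
  rw [this]
  congr 1
  have := Finset.map_univ_equiv e
  calc Multiset.map (⇑e) (Finset.univ : Finset (Fin k')).val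
      = ((Finset.univ : Finset (Fin k')).map e.toEmbedding).val := rfl
    _ = (Finset.univ : Finset (Fin k)).val := by rw [this]

lemma A3_comp_equiv {k k' : ℕ} (ω : Multiset ℕ) (e : Fin k' ≃ Fin k) (M : Fin k → ℕ) :
    A3 ω (M ∘ e) = A3 ω M := by
  unfold A3
  apply Finset.sum_nbij' (fun y => y ∘ e.symm) (fun y => y ∘ e)
  · intro y hy
    simp only [Fintype.mem_piFinset] at hy ⊢
    intro i
    simpa using hy (e.symm i)
  · intro y hy
    simp only [Fintype.mem_piFinset] at hy ⊢
    intro i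
    exact hy (e i)
  · intro y _; funext i; simp
  · intro y _; funext i; simp
  · intro y _
    have h1 : nzMulti (y ∘ e.symm) = nzMulti ((y ∘ e.symm) ∘ e) := (nzMulti_comp_equiv e _).symm
    have h2 : ((y ∘ e.symm) ∘ e) = y := by funext i; simp
    rw [h1, h2]
    congr 1
    rw [← Equiv.prod_comp e (fun i => ((M i).choose ((y ∘ e.symm) i) : ℝ))]
    apply Finset.prod_congr rfl
    intro i _
    simp

lemma get_cons (a : ℕ) (L : List ℕ) : (a :: L).get = Fin.cons a L.get := by
  funext i
  induction i using Fin.cases <;> simp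

lemma A3_perm {l₁ l₂ : List ℕ} (h : l₁.Perm l₂) : ∀ ω, A3 ω l₁.get = A3 ω l₂.get := by
  induction h with
  | nil => intro ω; rfl
  | cons x h ih =>
      intro ω
      rw [get_cons, get_cons, A3_cons, A3_cons]
      apply Finset.sum_congr rfl
      intro j _
      rw [ih ω]
      congr 1
      split_ifs <;> simp [ih]
  | swap x y l =>
      intro ω
      have he : (y :: x :: l).get = ((x :: y :: l).get) ∘ (Equiv.swap (0 : Fin (l.length+2)) 1) := by
        funext i
        induction i using Fin.cases with
        | zero => simp [Equiv.swap_apply_left]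
        | succ j =>
          induction j using Fin.cases with
          | zero =>
              have : (Fin.succ (0 : Fin (l.length+1))) = (1 : Fin (l.length+2)) := rfl
              simp [this, Equiv.swap_apply_right]
          | succ m =>
              have h0 : (Fin.succ (Fin.succ m)) ≠ (0 : Fin (l.length+2)) := Fin.succ_ne_zero _
              have h1 : (Fin.succ (Fin.succ m)) ≠ (1 : Fin (l.length+2)) := by
                intro hc
                have := congrArg Fin.val hc
                simp [Fin.val_succ] at this
              simp [Equiv.swap_apply_of_ne_of_ne h0 h1]
      rw [he]; exact A3_comp_equiv ω (Equiv.swap (0 : Fin (l.length+2)) 1) ((x :: y :: l).get)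
  | trans h1 h2 ih1 ih2 => intro ω; rw [ih1, ih2]

lemma A3_strip (t : ℕ) (L : List ℕ) (ω : Multiset ℕ) :
    A3 ω ((List.replicate t 0 ++ L).get) = A3 ω L.get := by
  induction t with
  | zero => rfl
  | succ t ih =>
      rw [show List.replicate (t+1) 0 ++ L = 0 :: (List.replicate t 0 ++ L) from rfl,
        get_cons, A3_cons]
      simp [ih]

lemma A3_canonical {k : ℕ} (ω : Multiset ℕ) (M : Fin k → ℕ) :
    A3 ω M = A3 ω ((nzMulti M).toList.get) := by
  have h1 : A3 ω ((List.ofFn M).get) = A3 ω M := by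
    have : (List.ofFn M).get = M ∘ (finCongr (List.length_ofFn : (List.ofFn M).length = k)) := by
      funext i; rw [List.get_ofFn]; rfl
    rw [this, A3_comp_equiv]
  set t := (List.ofFn M).count 0 with ht
  have hperm : (List.ofFn M).Perm (List.replicate t 0 ++ (nzMulti M).toList) := by
    rw [← Multiset.coe_eq_coe, ← Multiset.coe_add, Multiset.coe_toList, Multiset.coe_replicate,
      ← Multiset.filter_add_not (· ≠ 0) (↑(List.ofFn M) : Multiset ℕ)]
    unfold nzMulti
    rw [add_comm]
    congr 1
    have hfe : Multiset.filter (fun x => ¬ x ≠ 0) (↑(List.ofFn M) : Multiset ℕ)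
        = Multiset.filter (· = 0) (↑(List.ofFn M) : Multiset ℕ) := by
      apply Multiset.filter_congr
      intro x _
      simp
    rw [hfe, Multiset.filter_eq', Multiset.coe_count]
  rw [← h1, A3_perm hperm ω, A3_strip]

lemma chooseChain (m y w : ℕ) : m.choose (y+w) * (y+w).choose y = m.choose y * (m-y).choose w := by
  rcases le_or_gt (y+w) m with h | h
  · have hy : y ≤ m := le_trans (Nat.le_add_right _ _) h
    have hw : w ≤ m - y := by omega
    have key : ∀ s : ℕ, s = y.factorial * w.factorial * (m - (y+w)).factorial →
        m.choose (y+w) * (y+w).choose y * s = m.choose y * (m-y).choose w * s := by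
      intro s hs; subst hs
      have h1 := Nat.choose_mul_factorial_mul_factorial h
      have h2 := Nat.choose_mul_factorial_mul_factorial (Nat.le_add_right y w)
      have h3 := Nat.choose_mul_factorial_mul_factorial hy
      have h4 := Nat.choose_mul_factorial_mul_factorial hw
      have e1 : y + w - y = w := by omega
      have e2 : m - y - w = m - (y + w) := by omega
      rw [e1] at h2; rw [e2] at h4
      calc m.choose (y+w) * (y+w).choose y * (y.factorial * w.factorial * (m - (y+w)).factorial)
          = ((y+w).choose y * y.factorial * w.factorial) * (m.choose (y+w) * (m - (y+w)).factorial) := by ring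
        _ = (y+w).factorial * (m.choose (y+w) * (m - (y+w)).factorial) := by rw [h2]
        _ = m.choose (y+w) * (y+w).factorial * (m - (y+w)).factorial := by ring
        _ = m.factorial := h1
        _ = m.choose y * y.factorial * (m-y).factorial := h3.symm
        _ = (m.choose y * y.factorial) * ((m-y).choose w * w.factorial * (m - (y+w)).factorial) := by rw [h4]
        _ = m.choose y * (m-y).choose w * (y.factorial * w.factorial * (m - (y+w)).factorial) := by ring
    have := key _ rfl
    exact Nat.eq_of_mul_eq_mul_right (by positivity) this
  · rw [Nat.choose_eq_zero_of_lt h]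
    rcases le_or_gt y m with hy | hy
    · rw [Nat.choose_eq_zero_of_lt (show m - y < w by omega)]; ring
    · rw [Nat.choose_eq_zero_of_lt hy]; ring

lemma vandermonde_pi {k : ℕ} (c : Fin k → ℕ) (m : ℕ) :
    ∑ w ∈ Fintype.piFinset (fun i => Finset.range (c i + 1)),
      (if (∑ i, w i) = m then ∏ i, (c i).choose (w i) else 0) = (∑ i, c i).choose m := by
  induction k generalizing m with
  | zero =>
      have hu : (Fintype.piFinset (fun i : Fin 0 => Finset.range (c i + 1)))
          = (Finset.univ : Finset (Fin 0 → ℕ)) := by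
        apply Finset.eq_univ_iff_forall.2
        intro f
        rw [Fintype.mem_piFinset]
        exact fun i => i.elim0
      rw [hu]
      rw [Finset.univ_unique, Finset.sum_singleton]
      simp only [Finset.univ_eq_empty, Finset.sum_empty]
      by_cases h : m = 0 <;> simp [h, Nat.choose_eq_zero_of_lt, Nat.pos_of_ne_zero, (by omega : ¬ m = 0 → ¬ 0 = m)] <;> omega
  | succ k ih =>
      rw [sum_piFinset_succ]
      have step : ∀ x, ∑ g ∈ Fintype.piFinset (fun i : Fin k => Finset.range (c i.succ + 1)),
          (if (∑ i, (Fin.cons x g : Fin (k+1) → ℕ) i) = m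
            then ∏ i, (c i).choose ((Fin.cons x g : Fin (k+1) → ℕ) i) else 0)
          = if x ≤ m then (c 0).choose x * (∑ i : Fin k, c i.succ).choose (m - x) else 0 := by
        intro x
        by_cases hxm : x ≤ m
        · rw [if_pos hxm, ← ih (fun i => c i.succ) (m - x), Finset.mul_sum]
          apply Finset.sum_congr rfl
          intro g _
          rw [Fin.sum_univ_succ, Fin.prod_univ_succ]
          simp only [Fin.cons_zero, Fin.cons_succ]
          have : x + ∑ i : Fin k, g i = m ↔ ∑ i : Fin k, g i = m - x := by omega
          rw [if_congr this rfl rfl]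
          split_ifs <;> ring
        · rw [if_neg hxm, Finset.sum_eq_zero]
          intro g _
          rw [Fin.sum_univ_succ]
          simp only [Fin.cons_zero]
          rw [if_neg (by omega)]
      simp only [step]
      rw [Fin.sum_univ_succ]
      rw [Nat.add_choose_eq]
      rw [Finset.Nat.sum_antidiagonal_eq_sum_range_succ (f := fun i j => (c 0).choose i * (∑ i : Fin k, c i.succ).choose j)]
      -- both sides equal a sum over range (c 0 + m + 1)
      have h1 : ∑ x ∈ Finset.range (c 0 + 1), (if x ≤ m then (c 0).choose x * (∑ i : Fin k, c i.succ).choose (m - x) else 0)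
          = ∑ x ∈ Finset.range (c 0 + m + 1), (if x ≤ m then (c 0).choose x * (∑ i : Fin k, c i.succ).choose (m - x) else 0) := by
        apply Finset.sum_subset
        · intro x hx; simp only [Finset.mem_range] at *; omega
        · intro x hx hnx
          simp only [Finset.mem_range] at *
          have : c 0 < x := by omega
          rw [Nat.choose_eq_zero_of_lt this]
          split_ifs <;> simp
      have h2 : ∑ x ∈ Finset.range (m + 1), (c 0).choose x * (∑ i : Fin k, c i.succ).choose (m - x)
          = ∑ x ∈ Finset.range (c 0 + m + 1), (if x ≤ m then (c 0).choose x * (∑ i : Fin k, c i.succ).choose (m - x) else 0) := by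
        have e1 : (∑ x ∈ Finset.range (m + 1), (c 0).choose x * (∑ i : Fin k, c i.succ).choose (m - x))
            = ∑ x ∈ Finset.range (m + 1), (if x ≤ m then (c 0).choose x * (∑ i : Fin k, c i.succ).choose (m - x) else 0) := by
          apply Finset.sum_congr rfl
          intro x hx
          rw [if_pos (by simp only [Finset.mem_range] at hx; omega)]
        rw [e1]
        apply Finset.sum_subset
        · intro x hx; simp only [Finset.mem_range] at *; omega
        · intro x hx hnx
          simp only [Finset.mem_range] at *
          rw [if_neg (by omega)]
      rw [h1, h2]

lemma sum_get (L : List ℕ) : ∑ i, L.get i = L.sum := by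
  conv_rhs => rw [← List.ofFn_get L]
  rw [List.sum_ofFn]

lemma Hsub_eq (ω μ : Multiset ℕ) :
    Hsub ω μ = ((μ.sum.choose ω.sum : ℕ) : ℝ)⁻¹ * A2 ω μ.toList := by
  unfold Hsub A2 A3
  congr 1
  set L := μ.toList with hL
  have hsupp : Function.support (fun y : Fin L.length → ℕ =>
      if (∀ i, y i ≤ L.get i) ∧ (∑ i, y i) = ω.sum ∧ nzMulti y = ω then
        ((∏ i : Fin L.length, (L.get i).choose (y i) : ℕ) : ℝ) else 0)
      ⊆ ↑(Fintype.piFinset (fun i => Finset.range (L.get i + 1))) := by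
    intro y hy
    simp only [Function.mem_support, ne_eq, ite_eq_right_iff, not_forall] at hy
    obtain ⟨⟨h1, -, -⟩, -⟩ := hy
    simp only [Finset.mem_coe, Fintype.mem_piFinset, Finset.mem_range]
    intro i
    have := h1 i
    omega
  rw [finsum_eq_sum_of_support_subset _ hsupp]
  apply Finset.sum_congr rfl
  intro y hy
  simp only [Fintype.mem_piFinset, Finset.mem_range] at hy
  by_cases h : nzMulti y = ω
  · rw [if_pos ⟨fun i => by have := hy i; omega, by rw [← nzMulti_sum, h], h⟩, if_pos h]
    push_cast
    rfl
  · rw [if_neg (by tauto), if_neg h]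

lemma inner_eta {r : ℕ} (s : Multiset ℕ) (hpos : ∀ x ∈ s, x ≠ 0) (c : ℝ) :
    ∑ η : Nat.Partition r, (if s = η.parts then c else 0) = if s.sum = r then c else 0 := by
  by_cases h : s.sum = r
  · let η₀ : Nat.Partition r := ⟨s, fun {i} hi => Nat.pos_of_ne_zero (hpos i hi), h⟩
    rw [if_pos h, Fintype.sum_eq_single η₀]
    · rw [if_pos rfl]
    · intro η hne
      rw [if_neg]
      intro hc
      exact hne (Nat.Partition.ext (hc.symm.trans rfl))
  · rw [if_neg h, Finset.sum_eq_zero]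
    intro η _
    rw [if_neg]
    intro hc
    exact h (by rw [hc, η.parts_sum])

lemma nzMulti_pos {k : ℕ} (z : Fin k → ℕ) : ∀ x ∈ nzMulti z, x ≠ 0 := by
  intro x hx
  exact (Multiset.mem_filter.1 hx).2

lemma key (L : List ℕ) (ω : Multiset ℕ) (n m : ℕ) (hω : ω.sum = n) :
    ∑ η : Nat.Partition (n+m), A2 η.parts L * A2 ω η.parts.toList
      = (((L.sum - n).choose m : ℕ) : ℝ) * A2 ω L := by
  classical
  set B := Fintype.piFinset (fun i : Fin L.length => Finset.range (L.get i + 1)) with hB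
  have hmemB : ∀ z : Fin L.length → ℕ, z ∈ B ↔ ∀ i, z i ≤ L.get i := by
    intro z
    rw [hB, Fintype.mem_piFinset]
    constructor <;> intro h i <;> have := h i <;> simp only [Finset.mem_range] at * <;> omega
  have step12 : ∑ η : Nat.Partition (n+m), A2 η.parts L * A2 ω η.parts.toList
      = ∑ z ∈ B, (if (∑ i, z i) = n + m
          then (∏ i, ((L.get i).choose (z i) : ℝ)) * A3 ω z else 0) := by
    have hper : ∀ η : Nat.Partition (n+m), A2 η.parts L * A2 ω η.parts.toList
        = ∑ z ∈ B, (if nzMulti z = η.parts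
            then (∏ i, ((L.get i).choose (z i) : ℝ)) * A3 ω z else 0) := by
      intro η
      rw [show A2 η.parts L = ∑ z ∈ B,
          (if nzMulti z = η.parts then ∏ i, ((L.get i).choose (z i) : ℝ) else 0) from rfl]
      rw [Finset.sum_mul]
      apply Finset.sum_congr rfl
      intro z _
      rw [ite_mul, zero_mul]
      by_cases h : nzMulti z = η.parts
      · rw [if_pos h, if_pos h]
        congr 1
        rw [show A2 ω η.parts.toList = A3 ω η.parts.toList.get from rfl,
          A3_canonical ω z, h]
      · rw [if_neg h, if_neg h]
    rw [Finset.sum_congr rfl (fun η _ => hper η), Finset.sum_comm]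
    apply Finset.sum_congr rfl
    intro z _
    rw [inner_eta (nzMulti z) (nzMulti_pos z)
      ((∏ i, ((L.get i).choose (z i) : ℝ)) * A3 ω z), nzMulti_sum]
  rw [step12]
  have step3 : ∀ z ∈ B, A3 ω z
      = ∑ y ∈ B, (if nzMulti y = ω then ∏ i, ((z i).choose (y i) : ℝ) else 0) := by
    intro z hz
    rw [hmemB] at hz
    show (∑ y ∈ Fintype.piFinset (fun i => Finset.range (z i + 1)), _) = _
    apply Finset.sum_subset
    · intro y hy
      rw [Fintype.mem_piFinset] at hy
      rw [hmemB]
      intro i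
      have := hy i
      simp only [Finset.mem_range] at this
      have := hz i
      omega
    · intro y _ hny
      rw [Fintype.mem_piFinset] at hny
      push_neg at hny
      obtain ⟨i, hi⟩ := hny
      simp only [Finset.mem_range, not_lt] at hi
      have hzero : ((z i).choose (y i) : ℝ) = 0 := by
        rw [Nat.choose_eq_zero_of_lt (by omega)]
        simp
      split_ifs
      · exact Finset.prod_eq_zero (Finset.mem_univ i) hzero
      · rfl
  have step4 : ∑ z ∈ B, (if (∑ i, z i) = n + m
        then (∏ i, ((L.get i).choose (z i) : ℝ)) * A3 ω z else 0)
      = ∑ y ∈ B, ∑ z ∈ B, (if (∑ i, z i) = n + m ∧ nzMulti y = ω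
          then ∏ i, (((L.get i).choose (z i) : ℝ) * ((z i).choose (y i) : ℝ)) else 0) := by
    rw [← Finset.sum_comm]
    apply Finset.sum_congr rfl
    intro z hz
    by_cases hcz : (∑ i, z i) = n + m
    · rw [if_pos hcz, step3 z hz, Finset.mul_sum]
      apply Finset.sum_congr rfl
      intro y _
      rw [mul_ite, mul_zero]
      by_cases hy : nzMulti y = ω
      · rw [if_pos hy, if_pos ⟨hcz, hy⟩, ← Finset.prod_mul_distrib]
      · rw [if_neg hy, if_neg (by tauto)]
    · rw [if_neg hcz, Finset.sum_eq_zero]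
      intro y _
      rw [if_neg (by tauto)]
  rw [step4]
  have step5 : ∀ y ∈ B, ∑ z ∈ B, (if (∑ i, z i) = n + m ∧ nzMulti y = ω
      then ∏ i, (((L.get i).choose (z i) : ℝ) * ((z i).choose (y i) : ℝ)) else 0)
    = if nzMulti y = ω
      then (∏ i, ((L.get i).choose (y i) : ℝ)) * (((L.sum - n).choose m : ℕ) : ℝ) else 0 := by
    intro y hy
    by_cases hyω : nzMulti y = ω
    swap
    · rw [if_neg hyω, Finset.sum_eq_zero]
      intro z _
      rw [if_neg (by tauto)]
    rw [if_pos hyω]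
    have hyB : ∀ i, y i ≤ L.get i := (hmemB y).1 hy
    have hsum_y : ∑ i, y i = n := by rw [← nzMulti_sum, hyω, hω]
    have hfil : ∑ z ∈ B, (if (∑ i, z i) = n + m ∧ nzMulti y = ω
        then ∏ i, (((L.get i).choose (z i) : ℝ) * ((z i).choose (y i) : ℝ)) else 0)
      = ∑ z ∈ B.filter (fun z => ∀ i, y i ≤ z i), (if (∑ i, z i) = n + m ∧ nzMulti y = ω
        then ∏ i, (((L.get i).choose (z i) : ℝ) * ((z i).choose (y i) : ℝ)) else 0) := by
      rw [Finset.sum_filter_of_ne]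
      intro z _ hnz
      by_contra hP
      push_neg at hP
      obtain ⟨i, hi⟩ := hP
      apply hnz
      have hzero : (((L.get i).choose (z i) : ℝ) * ((z i).choose (y i) : ℝ)) = 0 := by
        rw [Nat.choose_eq_zero_of_lt (show z i < y i by omega)]
        simp
      split_ifs
      · exact Finset.prod_eq_zero (Finset.mem_univ i) hzero
      · rfl
    rw [hfil]
    set Bw := Fintype.piFinset (fun i : Fin L.length => Finset.range ((L.get i - y i) + 1)) with hBw
    have hbij : ∑ z ∈ B.filter (fun z => ∀ i, y i ≤ z i), (if (∑ i, z i) = n + m ∧ nzMulti y = ω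
        then ∏ i, (((L.get i).choose (z i) : ℝ) * ((z i).choose (y i) : ℝ)) else 0)
      = ∑ w ∈ Bw, (if (∑ i, (y i + w i)) = n + m ∧ nzMulti y = ω
        then ∏ i, (((L.get i).choose (y i + w i) : ℝ) * ((y i + w i).choose (y i) : ℝ)) else 0) := by
      apply Finset.sum_nbij' (fun z => fun i => z i - y i) (fun w => fun i => y i + w i)
      · intro z hz
        rw [Finset.mem_filter, hmemB] at hz
        rw [hBw, Fintype.mem_piFinset]
        intro i
        rw [Finset.mem_range]
        have h1 := hz.1 i
        have h2 := hz.2 i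
        omega
      · intro w hw
        rw [hBw, Fintype.mem_piFinset] at hw
        rw [Finset.mem_filter, hmemB]
        constructor
        · intro i
          try dsimp only
          have := hw i
          rw [Finset.mem_range] at this
          have := hyB i
          omega
        · intro i
          try dsimp only
          omega
      · intro z hz
        rw [Finset.mem_filter] at hz
        funext i
        try dsimp only
        have := hz.2 i
        omega
      · intro w _
        funext i
        try dsimp only
        omega
      · intro z hz
        rw [Finset.mem_filter] at hz
        have hzy : ∀ i, y i + (z i - y i) = z i := fun i => by have := hz.2 i; omega
        try dsimp only
        simp only [hzy]
    rw [hbij]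
    have hps : ∀ w : Fin L.length → ℕ, (∑ i, (y i + w i)) = (∑ i, y i) + ∑ i, w i :=
      fun w => Finset.sum_add_distrib
    have hvdm : ∑ w ∈ Bw, (if (∑ i, w i) = m
        then ∏ i, (((L.get i - y i).choose (w i) : ℝ)) else 0)
        = (((L.sum - n).choose m : ℕ) : ℝ) := by
      have hnat := vandermonde_pi (fun i => L.get i - y i) m
      have hcast := congrArg (fun t : ℕ => (t : ℝ)) hnat
      push_cast at hcast
      rw [hBw]
      convert hcast using 3
      rw [Finset.sum_tsub_distrib Finset.univ (fun i _ => hyB i), sum_get, hsum_y]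
    calc ∑ w ∈ Bw, (if (∑ i, (y i + w i)) = n + m ∧ nzMulti y = ω
          then ∏ i, (((L.get i).choose (y i + w i) : ℝ) * ((y i + w i).choose (y i) : ℝ)) else 0)
        = ∑ w ∈ Bw, (if (∑ i, w i) = m
          then (∏ i, ((L.get i).choose (y i) : ℝ)) * ∏ i, (((L.get i - y i).choose (w i) : ℝ)) else 0) := by
          apply Finset.sum_congr rfl
          intro w _
          have hcond : ((∑ i, (y i + w i)) = n + m ∧ nzMulti y = ω) ↔ (∑ i, w i) = m := by
            rw [hps w, hsum_y]
            constructor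
            · intro h; omega
            · intro h; exact ⟨by omega, hyω⟩
          rw [if_congr hcond rfl rfl]
          congr 1
          rw [← Finset.prod_mul_distrib]
          apply Finset.prod_congr rfl
          intro i _
          have := chooseChain (L.get i) (y i) (w i)
          have hc := congrArg (fun t : ℕ => (t : ℝ)) this
          push_cast at hc
          rw [hc]
      _ = (∏ i, ((L.get i).choose (y i) : ℝ)) * ∑ w ∈ Bw, (if (∑ i, w i) = m
          then ∏ i, (((L.get i - y i).choose (w i) : ℝ)) else 0) := by
          rw [Finset.mul_sum]
          apply Finset.sum_congr rfl
          intro w _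
          rw [mul_ite, mul_zero]
      _ = (∏ i, ((L.get i).choose (y i) : ℝ)) * (((L.sum - n).choose m : ℕ) : ℝ) := by rw [hvdm]
  rw [Finset.sum_congr rfl step5]
  rw [show A2 ω L = ∑ y ∈ B, (if nzMulti y = ω then ∏ i, ((L.get i).choose (y i) : ℝ) else 0) from rfl]
  rw [Finset.mul_sum]
  apply Finset.sum_congr rfl
  intro y _
  rw [mul_ite, mul_zero]
  split_ifs
  · ring
  · rfl

/-- **Chapman–Kolmogorov property of uniform subsampling of partitions** (consistency of
the pure-death dynamics on partitions): for `1 ≤ n ≤ r ≤ N`,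
`H(ω | μ) = Σ_{η ∈ 𝒫_r} H(η | μ) · H(ω | η)`. -/
theorem hsub_chapman_kolmogorov {N n r : ℕ} (hn : 1 ≤ n) (hnr : n ≤ r) (hrN : r ≤ N)
    (μ : Nat.Partition N) (ω : Nat.Partition n) :
    Hsub ω.parts μ.parts
      = ∑ η : Nat.Partition r, Hsub η.parts μ.parts * Hsub ω.parts η.parts := by
  obtain ⟨m, rfl⟩ : ∃ m, r = n + m := ⟨r - n, by omega⟩
  have hterm : ∀ η : Nat.Partition (n+m), Hsub η.parts μ.parts * Hsub ω.parts η.parts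
      = ((N.choose (n+m) : ℝ)⁻¹ * (((n+m).choose n : ℝ))⁻¹)
        * (A2 η.parts μ.parts.toList * A2 ω.parts η.parts.toList) := by
    intro η
    rw [Hsub_eq, Hsub_eq, μ.parts_sum, η.parts_sum, ω.parts_sum]
    ring
  rw [Finset.sum_congr rfl (fun η _ => hterm η), ← Finset.mul_sum,
    key μ.parts.toList ω.parts n m ω.parts_sum, Hsub_eq, μ.parts_sum, ω.parts_sum]
  have hLsum : (μ.parts.toList : List ℕ).sum = N := by
    rw [Multiset.sum_toList, μ.parts_sum]
  rw [hLsum]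
  have h1 : ((N.choose (n+m) : ℕ) : ℝ) ≠ 0 :=
    Nat.cast_ne_zero.2 (Nat.choose_pos (by omega)).ne'
  have h2 : (((n+m).choose n : ℕ) : ℝ) ≠ 0 :=
    Nat.cast_ne_zero.2 (Nat.choose_pos (by omega)).ne'
  have h3 : ((N.choose n : ℕ) : ℝ) ≠ 0 :=
    Nat.cast_ne_zero.2 (Nat.choose_pos (by omega)).ne'
  have hcc : ((N.choose (n+m) : ℕ) : ℝ) * (((n+m).choose n : ℕ) : ℝ)
      = ((N.choose n : ℕ) : ℝ) * (((N - n).choose m : ℕ) : ℝ) := by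
    exact_mod_cast congrArg (fun t : ℕ => (t : ℝ)) (chooseChain N n m)
  field_simp
  ring_nf
  ring_nf at hcc
  linear_combination A2 ω.parts μ.parts.toList * hcc

end
end

section
/- The block-counting transition functions solve the Kolmogorov forward equations of the pure-death chain. Let θ > 0 and l ≥ 1 be an integer. For 1 ≤ n ≤ l and t ∈ ℝ define d^θ_{l,n}(t) := Σ_{k=n}^{l} e^{−k(k+θ−1)t/2} · (−1)^{k−n} · (2k+θ−1)·(θ+n)_{(k−1)} / (n!·(k−n)!) · l_{[k]} / (θ+l)_{(k)}, where a_{(b)} := a(a+1)⋯(a+b−1) is the rising factorial with a_{(0)} := 1 and a_{[b]} := a(a−1)⋯(a−b+1) is the falling factorial with a_{[0]} := 1; set d^θ_{l,l+1}(t) := 0. Then for every 1 ≤ n ≤ l: (i) d^θ_{l,n}(0) = 1 if n = l and d^θ_{l,n}(0) = 0 if n < l; and (ii) for all t ∈ ℝ, (d/dt) d^θ_{l,n}(t) = ((n+1)(n+θ)/2) · d^θ_{l,n+1}(t) − (n(n+θ−1)/2) · d^θ_{l,n}(t). -/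
noncomputable section

/-- Falling factorial `a_{[b]} = a(a−1)⋯(a−b+1)`, with `a_{[0]} = 1`. -/
def fallingFac (a : ℝ) (b : ℕ) : ℝ := ∏ i ∈ Finset.range b, (a - i)

lemma risingFac_succ (a : ℝ) (b : ℕ) : risingFac a (b + 1) = risingFac a b * (a + b) :=
  Finset.prod_range_succ _ _

lemma fallingFac_succ (a : ℝ) (b : ℕ) : fallingFac a (b + 1) = fallingFac a b * (a - b) :=
  Finset.prod_range_succ _ _

lemma risingFac_pos {a : ℝ} (ha : 0 < a) (b : ℕ) : 0 < risingFac a b :=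
  Finset.prod_pos fun i _ => by positivity

lemma mul_risingFac_succ (a : ℝ) (b : ℕ) :
    a * risingFac (a + 1) b = risingFac a b * (a + b) := by
  induction b with
  | zero => simp [risingFac]
  | succ b ih =>
      rw [risingFac_succ, risingFac_succ, ← mul_assoc, ih]
      push_cast; ring

lemma fallingFac_succ_left (a : ℝ) (b : ℕ) :
    fallingFac a (b + 1) = a * fallingFac (a - 1) b := by
  rw [fallingFac, Finset.prod_range_succ', fallingFac]
  simp only [Nat.cast_add, Nat.cast_one, Nat.cast_zero, sub_zero]
  rw [mul_comm]
  congr 1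
  exact Finset.prod_congr rfl fun i _ => by ring

lemma fallingFac_nat_self (n : ℕ) : fallingFac (n : ℝ) n = n.factorial := by
  induction n with
  | zero => simp [fallingFac]
  | succ n ih =>
      rw [fallingFac_succ_left]
      push_cast
      rw [add_sub_cancel_right, ih, Nat.factorial_succ]
      push_cast; ring

lemma fallingFac_nat_zero {l k : ℕ} (h : l < k) : fallingFac (l : ℝ) k = 0 :=
  Finset.prod_eq_zero (Finset.mem_range.2 h) (by simp)

lemma hasDerivAt_exp_lin (c A t : ℝ) :
    HasDerivAt (fun s => Real.exp (-(c * s) / 2) * A)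
      (-(c / 2) * (Real.exp (-(c * t) / 2) * A)) t := by
  have h0 : (fun s : ℝ => -(c * s) / 2) = fun s : ℝ => -(c / 2) * s := by
    funext s; ring
  have h : HasDerivAt (fun s : ℝ => -(c * s) / 2) (-(c / 2)) t := by
    rw [h0]; simpa using (hasDerivAt_id t).const_mul (-(c / 2))
  have := (h.exp).mul_const A
  rw [show -(c / 2) * (Real.exp (-(c * t) / 2) * A) = Real.exp (-(c * t) / 2) * -(c / 2) * A by ring]
  exact this


/-- Telescoping auxiliary sequence for the initial-condition identity. -/
def Baux (θ : ℝ) (l n k : ℕ) : ℝ :=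
  ((k : ℝ) - (n : ℝ)) * (θ + (l : ℝ) + (k : ℝ) - 1) / ((l : ℝ) - (n : ℝ)) *
    (risingFac (θ + (n : ℝ)) (k - 1) * fallingFac (l : ℝ) k) /
    ((n.factorial : ℝ) * ((k - n).factorial : ℝ) * risingFac (θ + (l : ℝ)) k)

lemma perterm_init (θ : ℝ) (hθ : 0 < θ) (l m j : ℕ) (hml : m + 1 < l) :
    ((2 * ((m + 1 + j : ℕ) : ℝ) + θ - 1) * risingFac (θ + ((m + 1 : ℕ) : ℝ)) (m + j)) /
        (((m + 1).factorial : ℝ) * ((j : ℕ).factorial : ℝ)) *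
      (fallingFac (l : ℝ) (m + 1 + j) / risingFac (θ + (l : ℝ)) (m + 1 + j))
    = Baux θ l (m + 1) (m + 1 + j) + Baux θ l (m + 1) (m + 1 + j + 1) := by
  have e1 : (m + 1 + j) - 1 = m + j := by omega
  have e2 : (m + 1 + j) - (m + 1) = j := by omega
  have e3 : (m + 1 + j + 1) - 1 = (m + j) + 1 := by omega
  have e4 : (m + 1 + j + 1) - (m + 1) = j + 1 := by omega
  rw [Baux, Baux, e1, e2, e3, e4]
  rw [show (m + 1 + j + 1) = (m + 1 + j) + 1 from rfl, risingFac_succ, risingFac_succ,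
    fallingFac_succ, Nat.factorial_succ j]
  have hS : risingFac (θ + (l : ℝ)) (m + 1 + j) ≠ 0 :=
    ne_of_gt (risingFac_pos (by positivity) _)
  have hf1 : ((m + 1).factorial : ℝ) ≠ 0 := by positivity
  have hf2 : ((j : ℕ).factorial : ℝ) ≠ 0 := by positivity
  have hln : (l : ℝ) - ((m + 1 : ℕ) : ℝ) ≠ 0 := by
    have : ((m + 1 : ℕ) : ℝ) < (l : ℝ) := by exact_mod_cast hml
    linarith
  have hlk : θ + (l : ℝ) + ((m + 1 + j : ℕ) : ℝ) ≠ 0 := by positivity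
  push_cast at hln ⊢
  field_simp
  ring

lemma perterm_ode (θ : ℝ) (hθ : 0 < θ) (l n j : ℕ) (hn : 1 ≤ n) (E F : ℝ) :
    ((n : ℝ) * ((n : ℝ) + θ - 1) / 2
        - ((n + 1 + j : ℕ) : ℝ) * (((n + 1 + j : ℕ) : ℝ) + θ - 1) / 2) *
      (E * ((-1 : ℝ) ^ (j + 1) *
        ((2 * ((n + 1 + j : ℕ) : ℝ) + θ - 1) * risingFac (θ + (n : ℝ)) (n + j)) /
        ((n.factorial : ℝ) * ((j + 1).factorial : ℝ)) * F))
    = ((n : ℝ) + 1) * ((n : ℝ) + θ) / 2 *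
      (E * ((-1 : ℝ) ^ j *
        ((2 * ((n + 1 + j : ℕ) : ℝ) + θ - 1) * risingFac (θ + ((n + 1 : ℕ) : ℝ)) (n + j)) /
        (((n + 1).factorial : ℝ) * ((j : ℕ).factorial : ℝ)) * F)) := by
  have hθn : (θ + (n : ℝ)) ≠ 0 := by positivity
  have h1 : risingFac (θ + ((n + 1 : ℕ) : ℝ)) (n + j)
      = risingFac (θ + (n : ℝ)) (n + j) * (θ + (n : ℝ) + ((n + j : ℕ) : ℝ)) / (θ + (n : ℝ)) := by
    rw [eq_div_iff hθn, show θ + ((n + 1 : ℕ) : ℝ) = (θ + (n : ℝ)) + 1 by push_cast; ring]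
    rw [mul_comm (risingFac _ _), mul_risingFac_succ]
  rw [h1, Nat.factorial_succ (n), Nat.factorial_succ j, pow_succ]
  have hf1 : ((n : ℕ).factorial : ℝ) ≠ 0 := by positivity
  have hf2 : ((j : ℕ).factorial : ℝ) ≠ 0 := by positivity
  push_cast
  field_simp
  ring

/-- The transition function `d^θ_{l,n}(t)` of the block-counting pure-death chain started
from `l`.  For `n = l + 1` the indexing set `Icc (l+1) l` is empty, so the defining sum
gives `d^θ_{l,l+1}(t) = 0`, as per the stated convention. -/
def dCoef (θ : ℝ) (l n : ℕ) (t : ℝ) : ℝ :=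
  ∑ k ∈ Finset.Icc n l,
    Real.exp (-((k : ℝ) * ((k : ℝ) + θ - 1) * t) / 2) * (-1 : ℝ) ^ (k - n) *
      ((2 * (k : ℝ) + θ - 1) * risingFac (θ + n) (k - 1)) /
        ((n.factorial : ℝ) * ((k - n).factorial : ℝ)) *
      (fallingFac (l : ℝ) k / risingFac (θ + l) k)

/-- **The block-counting transition functions solve the Kolmogorov forward equations of
the pure-death chain** with death rate `k(k+θ−1)/2` from state `k`: they satisfy the
initial condition `d^θ_{l,n}(0) = δ_{n,l}` and the forward ODE
`(d/dt) d^θ_{l,n}(t) = ((n+1)(n+θ)/2)·d^θ_{l,n+1}(t) − (n(n+θ−1)/2)·d^θ_{l,n}(t)`. -/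
theorem dCoef_solves_forward_equations (θ : ℝ) (hθ : 0 < θ) (l : ℕ) (hl : 1 ≤ l) :
    (∀ t : ℝ, dCoef θ l (l + 1) t = 0) ∧
    ∀ n : ℕ, 1 ≤ n → n ≤ l →
      (dCoef θ l n 0 = if n = l then 1 else 0) ∧
      ∀ t : ℝ, HasDerivAt (fun s => dCoef θ l n s)
        (((n : ℝ) + 1) * ((n : ℝ) + θ) / 2 * dCoef θ l (n + 1) t
          - (n : ℝ) * ((n : ℝ) + θ - 1) / 2 * dCoef θ l n t) t := by
  have hval : ∀ (m : ℕ) (t : ℝ), dCoef θ l m t = ∑ k ∈ Finset.Icc m l,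
      Real.exp (-((k : ℝ) * ((k : ℝ) + θ - 1) * t) / 2) *
        ((-1 : ℝ) ^ (k - m) * ((2 * (k : ℝ) + θ - 1) * risingFac (θ + (m : ℝ)) (k - 1)) /
          ((m.factorial : ℝ) * ((k - m).factorial : ℝ)) *
          (fallingFac (l : ℝ) k / risingFac (θ + (l : ℝ)) k)) := by
    intro m t
    simp only [dCoef]
    exact Finset.sum_congr rfl fun k _ => by ring
  refine ⟨fun t => ?_, fun n hn hnl => ⟨?_, ?_⟩⟩
  · simp only [dCoef]
    rw [Finset.Icc_eq_empty (by omega : ¬ l + 1 ≤ l), Finset.sum_empty]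
  · -- initial condition
    rcases eq_or_lt_of_le hnl with heq | hlt
    · subst heq
      rw [if_pos rfl]
      obtain ⟨p, rfl⟩ : ∃ p, n = p + 1 := ⟨n - 1, by omega⟩
      simp only [dCoef, Finset.Icc_self, Finset.sum_singleton]
      simp only [mul_zero, neg_zero, zero_div, Real.exp_zero, one_mul, Nat.sub_self,
        pow_zero, Nat.factorial_zero, Nat.cast_one, mul_one, Nat.add_sub_cancel]
      rw [fallingFac_nat_self, risingFac_succ]
      rw [show (2 * ((p + 1 : ℕ) : ℝ) + θ - 1) = θ + ((p + 1 : ℕ) : ℝ) + (p : ℝ) by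
        push_cast; ring]
      have h1 : risingFac (θ + ((p + 1 : ℕ) : ℝ)) p ≠ 0 :=
        ne_of_gt (risingFac_pos (by positivity) _)
      have h2 : (((p + 1).factorial : ℕ) : ℝ) ≠ 0 := by positivity
      have h3 : θ + ((p + 1 : ℕ) : ℝ) + (p : ℝ) ≠ 0 := by positivity
      rw [div_mul_div_comm, div_eq_one_iff_eq (mul_ne_zero h2 (mul_ne_zero h1 h3))]
      ring
    · rw [if_neg (by omega)]
      have key : ∀ k, n ≤ k →
          (-1 : ℝ) ^ (k - n) * ((2 * (k : ℝ) + θ - 1) * risingFac (θ + (n : ℝ)) (k - 1)) /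
            ((n.factorial : ℝ) * ((k - n).factorial : ℝ)) *
            (fallingFac (l : ℝ) k / risingFac (θ + (l : ℝ)) k)
          = (-1 : ℝ) ^ (k - n) * (Baux θ l n k + Baux θ l n (k + 1)) := by
        intro k hk
        obtain ⟨m, rfl⟩ : ∃ m, n = m + 1 := ⟨n - 1, by omega⟩
        obtain ⟨j, rfl⟩ : ∃ j, k = m + 1 + j := ⟨k - (m + 1), by omega⟩
        have e1 : (m + 1 + j) - 1 = m + j := by omega
        have e2 : (m + 1 + j) - (m + 1) = j := by omega
        rw [e1, e2, ← perterm_init θ hθ l m j hlt]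
        ring
      have htel : ∀ M, n ≤ M → ∑ k ∈ Finset.Icc n M,
          ((-1 : ℝ) ^ (k - n) * ((2 * (k : ℝ) + θ - 1) * risingFac (θ + (n : ℝ)) (k - 1)) /
            ((n.factorial : ℝ) * ((k - n).factorial : ℝ)) *
            (fallingFac (l : ℝ) k / risingFac (θ + (l : ℝ)) k))
          = (-1 : ℝ) ^ (M - n) * Baux θ l n (M + 1) := by
        intro M hM
        induction M, hM using Nat.le_induction with
        | base =>
            rw [Finset.Icc_self, Finset.sum_singleton, key n le_rfl]
            have hB : Baux θ l n n = 0 := by simp [Baux]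
            rw [hB, Nat.sub_self]
            ring
        | succ M hM ih =>
            rw [Finset.sum_Icc_succ_top (by omega), ih, key (M + 1) (by omega)]
            have e : M + 1 - n = (M - n) + 1 := by omega
            rw [e, pow_succ]
            ring
      have hB0 : Baux θ l n (l + 1) = 0 := by
        simp [Baux, fallingFac_nat_zero (Nat.lt_succ_self l)]
      calc dCoef θ l n 0
          = ∑ k ∈ Finset.Icc n l,
            ((-1 : ℝ) ^ (k - n) * ((2 * (k : ℝ) + θ - 1) * risingFac (θ + (n : ℝ)) (k - 1)) /
              ((n.factorial : ℝ) * ((k - n).factorial : ℝ)) *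
              (fallingFac (l : ℝ) k / risingFac (θ + (l : ℝ)) k)) := by
            rw [hval n 0]
            exact Finset.sum_congr rfl fun k _ => by
              simp only [mul_zero, neg_zero, zero_div, Real.exp_zero, one_mul]
        _ = (-1 : ℝ) ^ (l - n) * Baux θ l n (l + 1) := htel l hnl
        _ = 0 := by rw [hB0]; ring
  · -- the forward ODE
    intro t
    have hder : HasDerivAt (fun s => dCoef θ l n s)
        (∑ k ∈ Finset.Icc n l, -(((k : ℝ) * ((k : ℝ) + θ - 1)) / 2) *
          (Real.exp (-(((k : ℝ) * ((k : ℝ) + θ - 1)) * t) / 2) *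
            ((-1 : ℝ) ^ (k - n) * ((2 * (k : ℝ) + θ - 1) * risingFac (θ + (n : ℝ)) (k - 1)) /
              ((n.factorial : ℝ) * ((k - n).factorial : ℝ)) *
              (fallingFac (l : ℝ) k / risingFac (θ + (l : ℝ)) k)))) t := by
      have hfun : (fun s => dCoef θ l n s) = fun s => ∑ k ∈ Finset.Icc n l,
          Real.exp (-(((k : ℝ) * ((k : ℝ) + θ - 1)) * s) / 2) *
            ((-1 : ℝ) ^ (k - n) * ((2 * (k : ℝ) + θ - 1) * risingFac (θ + (n : ℝ)) (k - 1)) /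
              ((n.factorial : ℝ) * ((k - n).factorial : ℝ)) *
              (fallingFac (l : ℝ) k / risingFac (θ + (l : ℝ)) k)) :=
        funext fun s => hval n s
      rw [hfun]
      exact HasDerivAt.fun_sum fun k _ => hasDerivAt_exp_lin _ _ t
    have hsum : ∑ k ∈ Finset.Icc n l, -(((k : ℝ) * ((k : ℝ) + θ - 1)) / 2) *
          (Real.exp (-(((k : ℝ) * ((k : ℝ) + θ - 1)) * t) / 2) *
            ((-1 : ℝ) ^ (k - n) * ((2 * (k : ℝ) + θ - 1) * risingFac (θ + (n : ℝ)) (k - 1)) /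
              ((n.factorial : ℝ) * ((k - n).factorial : ℝ)) *
              (fallingFac (l : ℝ) k / risingFac (θ + (l : ℝ)) k)))
        = ((n : ℝ) + 1) * ((n : ℝ) + θ) / 2 * dCoef θ l (n + 1) t
          - (n : ℝ) * ((n : ℝ) + θ - 1) / 2 * dCoef θ l n t := by
      rw [hval (n + 1) t, hval n t, Finset.mul_sum, Finset.mul_sum]
      have hins : Finset.Icc n l = insert n (Finset.Icc (n + 1) l) := by
        ext x; simp only [Finset.mem_Icc, Finset.mem_insert]; omega
      have hnot : n ∉ Finset.Icc (n + 1) l := by simp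
      have hterm : ∀ k ∈ Finset.Icc (n + 1) l,
          -(((k : ℝ) * ((k : ℝ) + θ - 1)) / 2) *
            (Real.exp (-(((k : ℝ) * ((k : ℝ) + θ - 1)) * t) / 2) *
              ((-1 : ℝ) ^ (k - n) * ((2 * (k : ℝ) + θ - 1) * risingFac (θ + (n : ℝ)) (k - 1)) /
                ((n.factorial : ℝ) * ((k - n).factorial : ℝ)) *
                (fallingFac (l : ℝ) k / risingFac (θ + (l : ℝ)) k)))
          = ((n : ℝ) + 1) * ((n : ℝ) + θ) / 2 *
              (Real.exp (-((k : ℝ) * ((k : ℝ) + θ - 1) * t) / 2) *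
                ((-1 : ℝ) ^ (k - (n + 1)) *
                  ((2 * (k : ℝ) + θ - 1) * risingFac (θ + ((n + 1 : ℕ) : ℝ)) (k - 1)) /
                  (((n + 1).factorial : ℝ) * ((k - (n + 1)).factorial : ℝ)) *
                  (fallingFac (l : ℝ) k / risingFac (θ + (l : ℝ)) k)))
            - (n : ℝ) * ((n : ℝ) + θ - 1) / 2 *
              (Real.exp (-((k : ℝ) * ((k : ℝ) + θ - 1) * t) / 2) *
                ((-1 : ℝ) ^ (k - n) *
                  ((2 * (k : ℝ) + θ - 1) * risingFac (θ + (n : ℝ)) (k - 1)) /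
                  ((n.factorial : ℝ) * ((k - n).factorial : ℝ)) *
                  (fallingFac (l : ℝ) k / risingFac (θ + (l : ℝ)) k))) := by
        intro k hk
        have hk' : n + 1 ≤ k ∧ k ≤ l := Finset.mem_Icc.1 hk
        obtain ⟨j, rfl⟩ : ∃ j, k = n + 1 + j := ⟨k - (n + 1), by omega⟩
        have e1 : (n + 1 + j) - n = j + 1 := by omega
        have e2 : (n + 1 + j) - 1 = n + j := by omega
        have e3 : (n + 1 + j) - (n + 1) = j := by omega
        rw [e1, e2, e3]
        have h := perterm_ode θ hθ l n j hn
          (Real.exp (-((((n + 1 + j : ℕ) : ℝ)) * ((((n + 1 + j : ℕ) : ℝ)) + θ - 1) * t) / 2))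
          (fallingFac (l : ℝ) (n + 1 + j) / risingFac (θ + (l : ℝ)) (n + 1 + j))
        linear_combination h
      rw [hins, Finset.sum_insert hnot, Finset.sum_insert hnot,
        Finset.sum_congr rfl hterm, Finset.sum_sub_distrib]
      ring
    rw [← hsum]
    exact hder


end
end
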